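/- arXiv:1511.01562 — 5 statements merged into one kernel-verified Lean document; each statement's English description precedes it below -/
import Mathlib

section
/- Let 𝒜 : ℝ^{m×n} → ℝ^p be a linear map with restricted isometry constants R_{2r} and R_{3r}, let X ∈ ℝ^{m×n} have rank r, and set κ_1 = 0.1 and κ_2 = 1. Define ε_α = R_{2r}/((1−R_{2r}) − κ_1(1+R_{2r})), ε_β = κ_2 R_{2r}/(1−R_{2r}) + κ_1 κ_2/(1−R_{2r}), τ_1 = 2(R_{2r}+R_{3r})(1+ε_α) + 2ε_α + (4R_{2r}/σ_min(X))‖X‖_F + ε_β, τ_2 = 2ε_β(1+ε_α)(1+R_{2r}), and γ = τ_1 + τ_2. If R_{3r} ≤ (σ_min(X)/σ_max(X)) · 1/(25√r), then γ < 1. -/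
open Matrix BigOperators

/-- Frobenius inner product of two real matrices. -/
noncomputable def frobInner {m n : ℕ} (A B : Matrix (Fin m) (Fin n) ℝ) : ℝ :=
  ∑ i, ∑ j, A i j * B i j

/-- Frobenius norm of a real matrix. -/
noncomputable def frobNorm {m n : ℕ} (A : Matrix (Fin m) (Fin n) ℝ) : ℝ :=
  Real.sqrt (∑ i, ∑ j, (A i j) ^ 2)

/-- Euclidean inner product on `ℝ^p`. -/
noncomputable def euclInner {p : ℕ} (x y : Fin p → ℝ) : ℝ := ∑ i, x i * y i

/-- Euclidean norm on `ℝ^p`. -/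
noncomputable def euclNorm {p : ℕ} (x : Fin p → ℝ) : ℝ := Real.sqrt (∑ i, (x i) ^ 2)

/-- `R` is the restricted isometry constant of order `s` of the linear map `A`:
the smallest number `t` such that `(1-t)‖Z‖_F² ≤ ‖A Z‖₂² ≤ (1+t)‖Z‖_F²`
for all matrices `Z` of rank at most `s`. -/
def IsRIC {m n p : ℕ} (A : Matrix (Fin m) (Fin n) ℝ →ₗ[ℝ] (Fin p → ℝ)) (s : ℕ) (R : ℝ) :
    Prop :=
  IsLeast {t : ℝ | ∀ Z : Matrix (Fin m) (Fin n) ℝ, Z.rank ≤ s →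
    (1 - t) * (frobNorm Z) ^ 2 ≤ (euclNorm (A Z)) ^ 2 ∧
      (euclNorm (A Z)) ^ 2 ≤ (1 + t) * (frobNorm Z) ^ 2} R

/-- Orthogonal projection onto the tangent space of the rank-`r` manifold at
`U * Σ * Vᵀ`: `P(Z) = U Uᵀ Z + Z V Vᵀ − U Uᵀ Z V Vᵀ`. -/
noncomputable def tangentProj {m n r : ℕ} (U : Matrix (Fin m) (Fin r) ℝ)
    (V : Matrix (Fin n) (Fin r) ℝ) (Z : Matrix (Fin m) (Fin n) ℝ) :
    Matrix (Fin m) (Fin n) ℝ :=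
  U * Uᵀ * Z + Z * (V * Vᵀ) - U * Uᵀ * Z * (V * Vᵀ)

/-- Spectral (operator) norm of a real matrix. -/
noncomputable def specNorm {m n : ℕ} (A : Matrix (Fin m) (Fin n) ℝ) : ℝ :=
  sSup {c : ℝ | ∃ x : Fin n → ℝ, euclNorm x ≤ 1 ∧ c = euclNorm (A.mulVec x)}

/-! Everything in `γ` is controlled by `R₃ᵣ`. Since `X ≠ 0` has rank `≤ 2r` we get `0 ≤ R₂ᵣ`, and
monotonicity in the order gives `R₂ᵣ ≤ R₃ᵣ`. The assumption gives `R₃ᵣ ≤ 1/25` (as `σ_min ≤ σ_max`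
and `r ≥ 1`) and, with `‖X‖_F ≤ √r σ_max`, also `4 R₂ᵣ ‖X‖_F / σ_min ≤ 4 R₃ᵣ √r σ_max / σ_min ≤ 4/25`.
Then `ε_α ≤ 0.05` and `ε_β ≤ 0.15`, so that `γ ≤ 0.906`. -/

lemma frobNorm_sq_eq_trace {m n : ℕ} (Z : Matrix (Fin m) (Fin n) ℝ) :
    frobNorm Z ^ 2 = (Zᵀ * Z).trace := by
  rw [frobNorm, Real.sq_sqrt (by positivity), Finset.sum_comm]
  simp [Matrix.trace, Matrix.mul_apply, sq]

lemma frobNorm_sq_of_svd {m n : ℕ} {κ : Type*} [Fintype κ] [DecidableEq κ]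
    {U : Matrix (Fin m) κ ℝ} {V : Matrix (Fin n) κ ℝ} {S : Matrix κ κ ℝ}
    (hU : Uᵀ * U = 1) (hV : Vᵀ * V = 1) (hS : S.IsDiag) :
    frobNorm (U * S * Vᵀ) ^ 2 = ∑ k, S k k ^ 2 := by
  have hgram : (U * S * Vᵀ)ᵀ * (U * S * Vᵀ) = V * (Sᵀ * S) * Vᵀ := by
    simp only [Matrix.transpose_mul, Matrix.transpose_transpose, Matrix.mul_assoc]
    rw [← Matrix.mul_assoc Uᵀ, hU, Matrix.one_mul]
  rw [frobNorm_sq_eq_trace, hgram, Matrix.trace_mul_comm, ← Matrix.mul_assoc, hV,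
    Matrix.one_mul]
  refine Finset.sum_congr rfl fun k _ => ?_
  rw [Matrix.diag_apply, Matrix.mul_apply, Finset.sum_eq_single k
    (fun j _ hjk => by rw [Matrix.transpose_apply, hS hjk, zero_mul]) (by simp),
    Matrix.transpose_apply, sq]

lemma frobNorm_svd_le {m n : ℕ} {κ : Type*} [Fintype κ] [DecidableEq κ]
    {U : Matrix (Fin m) κ ℝ} {V : Matrix (Fin n) κ ℝ} {S : Matrix κ κ ℝ} {M : ℝ}
    (hU : Uᵀ * U = 1) (hV : Vᵀ * V = 1) (hS : S.IsDiag)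
    (hS0 : ∀ k, 0 ≤ S k k) (hSM : ∀ k, S k k ≤ M) :
    frobNorm (U * S * Vᵀ) ≤ Real.sqrt (Fintype.card κ) * M := by
  have hsq : frobNorm (U * S * Vᵀ) ^ 2 ≤ (Real.sqrt (Fintype.card κ) * M) ^ 2 := by
    rw [frobNorm_sq_of_svd hU hV hS, mul_pow, Real.sq_sqrt (Nat.cast_nonneg _)]
    calc ∑ k, S k k ^ 2 ≤ ∑ _k : κ, M ^ 2 :=
          Finset.sum_le_sum fun k _ => pow_le_pow_left₀ (hS0 k) (hSM k) 2
      _ = _ := by rw [Finset.sum_const, nsmul_eq_mul, Finset.card_univ]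
  have hrhs : 0 ≤ Real.sqrt (Fintype.card κ) * M := by
    rcases isEmpty_or_nonempty κ with hκ | ⟨⟨k⟩⟩
    · simp
    · exact mul_nonneg (Real.sqrt_nonneg _) ((hS0 k).trans (hSM k))
  exact le_of_pow_le_pow_left₀ two_ne_zero hrhs hsq

lemma frobNorm_svd_pos {m n : ℕ} {κ : Type*} [Fintype κ] [DecidableEq κ] [Nonempty κ]
    {U : Matrix (Fin m) κ ℝ} {V : Matrix (Fin n) κ ℝ} {S : Matrix κ κ ℝ}
    (hU : Uᵀ * U = 1) (hV : Vᵀ * V = 1) (hS : S.IsDiag) (hpos : ∀ k, 0 < S k k) :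
    0 < frobNorm (U * S * Vᵀ) := by
  have hsq : 0 < frobNorm (U * S * Vᵀ) ^ 2 := by
    rw [frobNorm_sq_of_svd hU hV hS]
    exact Finset.sum_pos (fun k _ => pow_pos (hpos k) 2) Finset.univ_nonempty
  exact lt_of_pow_lt_pow_left₀ 2 (Real.sqrt_nonneg _) (by rwa [zero_pow two_ne_zero])

lemma IsRIC.nonneg {m n p s : ℕ} {A : Matrix (Fin m) (Fin n) ℝ →ₗ[ℝ] (Fin p → ℝ)} {R : ℝ}
    (h : IsRIC A s R) {Z : Matrix (Fin m) (Fin n) ℝ} (hZ : Z.rank ≤ s)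
    (hZ0 : 0 < frobNorm Z) : 0 ≤ R := by
  obtain ⟨hlow, hup⟩ := h.1 Z hZ
  nlinarith [pow_pos hZ0 2]

lemma IsRIC.mono {m n p s s' : ℕ} {A : Matrix (Fin m) (Fin n) ℝ →ₗ[ℝ] (Fin p → ℝ)}
    {R R' : ℝ} (h : IsRIC A s R) (h' : IsRIC A s' R') (hss' : s ≤ s') : R ≤ R' :=
  h.2 fun Z hZ => h'.1 Z (hZ.trans hss')

lemma epsAlpha_bounds {R : ℝ} (h0 : 0 ≤ R) (h1 : R ≤ 1 / 25) :
    0 ≤ R / ((1 - R) - 0.1 * (1 + R)) ∧ R / ((1 - R) - 0.1 * (1 + R)) ≤ 0.05 := by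
  have hden : 0 < (1 - R) - 0.1 * (1 + R) := by linarith
  exact ⟨div_nonneg h0 hden.le, by rw [div_le_iff₀ hden]; linarith⟩

lemma epsBeta_bounds {R : ℝ} (h0 : 0 ≤ R) (h1 : R ≤ 1 / 25) :
    0 ≤ 1 * R / (1 - R) + 0.1 * 1 / (1 - R) ∧ 1 * R / (1 - R) + 0.1 * 1 / (1 - R) ≤ 0.15 := by
  have hden : 0 < 1 - R := by linarith
  rw [← add_div]
  exact ⟨div_nonneg (by linarith) hden.le, by rw [div_le_iff₀ hden]; linarith⟩

lemma gamma_lt_one_of_bounds {R2 R3 εα εβ t : ℝ} (hR2 : 0 ≤ R2) (hR23 : R2 ≤ R3)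
    (hR3 : R3 ≤ 1 / 25) (hα : 0 ≤ εα ∧ εα ≤ 0.05) (hβ : 0 ≤ εβ ∧ εβ ≤ 0.15)
    (ht : t ≤ 4 / 25) :
    2 * (R2 + R3) * (1 + εα) + 2 * εα + t + εβ + 2 * εβ * (1 + εα) * (1 + R2) < 1 := by
  obtain ⟨hα0, hα1⟩ := hα
  obtain ⟨hβ0, hβ1⟩ := hβ
  nlinarith [mul_le_mul hβ1 hα1 hα0 (by norm_num)]

/-- With `κ₁ = 0.1` and `κ₂ = 1`, if `R₃ᵣ ≤ (σ_min(X)/σ_max(X))·1/(25√r)`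
then `γ = τ₁ + τ₂ < 1`. -/
theorem rcg_ric_condition {m n p r : ℕ}
    (hr : 0 < r)
    (A : Matrix (Fin m) (Fin n) ℝ →ₗ[ℝ] (Fin p → ℝ))
    (R2 R3 : ℝ) (hR2 : IsRIC A (2 * r) R2) (hR3 : IsRIC A (3 * r) R3)
    (X : Matrix (Fin m) (Fin n) ℝ) (hrankX : X.rank = r)
    -- reduced SVD of `X`, providing `σ_min(X) = ⨅ i, SX i i` and `σ_max(X) = ⨆ i, SX i i`
    (UX : Matrix (Fin m) (Fin r) ℝ) (VX : Matrix (Fin n) (Fin r) ℝ)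
    (SX : Matrix (Fin r) (Fin r) ℝ)
    (hUX : UXᵀ * UX = 1) (hVX : VXᵀ * VX = 1)
    (hSX : SX.IsDiag ∧ ∀ i, 0 < SX i i) (hXsvd : X = UX * SX * VXᵀ)
    (κ1 κ2 : ℝ) (hκ1 : κ1 = 0.1) (hκ2 : κ2 = 1)
    (εα εβ τ1 τ2 γ : ℝ)
    (hεα : εα = R2 / ((1 - R2) - κ1 * (1 + R2)))
    (hεβ : εβ = κ2 * R2 / (1 - R2) + κ1 * κ2 / (1 - R2))
    (hτ1 : τ1 = 2 * (R2 + R3) * (1 + εα) + 2 * εα +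
      (4 * R2 / (⨅ i, SX i i)) * frobNorm X + εβ)
    (hτ2 : τ2 = 2 * εβ * (1 + εα) * (1 + R2))
    (hγ : γ = τ1 + τ2)
    (hR3bound : R3 ≤ ((⨅ i, SX i i) / (⨆ i, SX i i)) * (1 / (25 * Real.sqrt r))) :
    γ < 1 := by
  have : Nonempty (Fin r) := ⟨⟨0, hr⟩⟩
  set smin := ⨅ i, SX i i
  set smax := ⨆ i, SX i i
  have hsmin_pos : 0 < smin := by
    obtain ⟨i, hi⟩ := exists_eq_ciInf_of_finite (f := fun i => SX i i)
    exact (hSX.2 i).trans_eq hi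
  have hle_smax : ∀ i, SX i i ≤ smax := le_ciSup (Set.finite_range _).bddAbove
  have hsmin_le_smax : smin ≤ smax :=
    ciInf_le_ciSup (Set.finite_range _).bddBelow (Set.finite_range _).bddAbove
  subst hXsvd
  have hfX_pos := frobNorm_svd_pos hUX hVX hSX.1 hSX.2
  have hfX_le : frobNorm (UX * SX * VXᵀ) ≤ Real.sqrt r * smax := by
    simpa using frobNorm_svd_le hUX hVX hSX.1 (fun i => (hSX.2 i).le) hle_smax
  have hR2_nonneg : 0 ≤ R2 := hR2.nonneg (by omega) hfX_pos
  have hR23 : R2 ≤ R3 := hR2.mono hR3 (by omega)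
  have hsqrt_r : 1 ≤ Real.sqrt r := Real.one_le_sqrt.mpr (by exact_mod_cast hr)
  have hR3_mul : R3 * (25 * Real.sqrt r * smax) ≤ smin := by
    rwa [div_mul_div_comm, mul_one, mul_comm smax, le_div_iff₀ (by nlinarith)] at hR3bound
  have hR3_small : R3 ≤ 1 / 25 := by nlinarith
  have ht : 4 * R2 / smin * frobNorm (UX * SX * VXᵀ) ≤ 4 / 25 := by
    rw [div_mul_eq_mul_div, div_le_iff₀ hsmin_pos]
    nlinarith
  subst hγ hτ1 hτ2 hεα hεβ hκ1 hκ2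
  exact gamma_lt_one_of_bounds hR2_nonneg hR23 hR3_small
    (epsAlpha_bounds hR2_nonneg (hR23.trans hR3_small))
    (epsBeta_bounds hR2_nonneg (hR23.trans hR3_small)) ht
end

section
/- Let X_l = U_l Σ_l V_l^* be an m×n matrix of rank r with reduced SVD, let S_l be the tangent space of the rank-r matrix manifold at X_l, and let X be another m×n matrix of rank r. Then ‖(I − P_{S_l})(X)‖_F ≤ (1/σ_min(X)) ‖X_l − X‖_2 ‖X_l − X‖_F ≤ (1/σ_min(X)) ‖X_l − X‖_F². -/
open Matrix BigOperators

/- ## Auxiliary machinery -/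

noncomputable def vsq {p : ℕ} (x : Fin p → ℝ) : ℝ := ∑ i, x i ^ 2

noncomputable def fsq {m n : ℕ} (A : Matrix (Fin m) (Fin n) ℝ) : ℝ := ∑ i, ∑ j, A i j ^ 2

lemma vsq_nonneg {p : ℕ} (x : Fin p → ℝ) : 0 ≤ vsq x := by unfold vsq; positivity

lemma fsq_nonneg {m n : ℕ} (A : Matrix (Fin m) (Fin n) ℝ) : 0 ≤ fsq A := by
  unfold fsq; positivity

lemma euclNorm_eq {p : ℕ} (x : Fin p → ℝ) : euclNorm x = Real.sqrt (vsq x) := rfl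

lemma frobNorm_eq {m n : ℕ} (A : Matrix (Fin m) (Fin n) ℝ) :
    frobNorm A = Real.sqrt (fsq A) := rfl

lemma euclNorm_nonneg {p : ℕ} (x : Fin p → ℝ) : 0 ≤ euclNorm x := Real.sqrt_nonneg _

lemma frobNorm_nonneg {m n : ℕ} (A : Matrix (Fin m) (Fin n) ℝ) : 0 ≤ frobNorm A :=
  Real.sqrt_nonneg _

lemma euclNorm_sq {p : ℕ} (x : Fin p → ℝ) : euclNorm x ^ 2 = vsq x :=
  Real.sq_sqrt (vsq_nonneg x)

lemma vsq_eq_dot {p : ℕ} (x : Fin p → ℝ) : vsq x = x ⬝ᵥ x := by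
  simp [vsq, dotProduct, sq]

lemma vsq_le_one {p : ℕ} {x : Fin p → ℝ} (h : euclNorm x ≤ 1) : vsq x ≤ 1 := by
  nlinarith [euclNorm_sq x, euclNorm_nonneg x]

lemma euclNorm_le_of_vsq_le {p q : ℕ} {x : Fin p → ℝ} {y : Fin q → ℝ}
    (h : vsq x ≤ vsq y) : euclNorm x ≤ euclNorm y := Real.sqrt_le_sqrt h

/-- Orthonormal columns preserve the squared norm. -/
lemma vsq_orth_mulVec {p k : ℕ} (W : Matrix (Fin p) (Fin k) ℝ) (hW : Wᵀ * W = 1)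
    (y : Fin k → ℝ) : vsq (W *ᵥ y) = vsq y := by
  rw [vsq_eq_dot, vsq_eq_dot, dotProduct_mulVec, ← mulVec_transpose, mulVec_mulVec, hW,
    one_mulVec]

lemma euclNorm_orth_mulVec {p k : ℕ} (W : Matrix (Fin p) (Fin k) ℝ) (hW : Wᵀ * W = 1)
    (y : Fin k → ℝ) : euclNorm (W *ᵥ y) = euclNorm y := by
  rw [euclNorm_eq, euclNorm_eq, vsq_orth_mulVec W hW]

/-- Symmetric idempotent matrices contract the squared norm. -/
lemma vsq_proj_le {k : ℕ} (Q : Matrix (Fin k) (Fin k) ℝ) (hQt : Qᵀ = Q)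
    (hQ2 : Q * Q = Q) (y : Fin k → ℝ) : vsq (Q *ᵥ y) ≤ vsq y := by
  have key : (Q *ᵥ y) ⬝ᵥ (Q *ᵥ y) = y ⬝ᵥ (Q *ᵥ y) := by
    conv_lhs => rw [dotProduct_mulVec, ← mulVec_transpose, hQt, mulVec_mulVec, hQ2]
    exact dotProduct_comm _ _
  have h0 : 0 ≤ vsq (y - Q *ᵥ y) := vsq_nonneg _
  have expand : vsq (y - Q *ᵥ y) = vsq y - vsq (Q *ᵥ y) := by
    rw [vsq_eq_dot, vsq_eq_dot, vsq_eq_dot, sub_dotProduct, dotProduct_sub, dotProduct_sub,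
      key, dotProduct_comm (Q *ᵥ y) y]
    ring
  linarith

lemma euclNorm_proj_le {k : ℕ} (Q : Matrix (Fin k) (Fin k) ℝ) (hQt : Qᵀ = Q)
    (hQ2 : Q * Q = Q) (y : Fin k → ℝ) : euclNorm (Q *ᵥ y) ≤ euclNorm y :=
  euclNorm_le_of_vsq_le (vsq_proj_le Q hQt hQ2 y)

/-- Cauchy–Schwarz row by row. -/
lemma vsq_mulVec_le_fsq {m n : ℕ} (A : Matrix (Fin m) (Fin n) ℝ) (x : Fin n → ℝ) :
    vsq (A *ᵥ x) ≤ fsq A * vsq x := by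
  unfold vsq fsq
  calc ∑ i, (A *ᵥ x) i ^ 2 ≤ ∑ i, ((∑ j, A i j ^ 2) * ∑ j, x j ^ 2) := by
        apply Finset.sum_le_sum; intro i _
        have h : (A *ᵥ x) i = ∑ j, A i j * x j := rfl
        rw [h]; exact Finset.sum_mul_sq_le_sq_mul_sq _ _ _
    _ = (∑ i, ∑ j, A i j ^ 2) * ∑ j, x j ^ 2 := by rw [Finset.sum_mul]

lemma specSet_le_frob {m n : ℕ} (A : Matrix (Fin m) (Fin n) ℝ) {c : ℝ}
    (hc : c ∈ {c : ℝ | ∃ x : Fin n → ℝ, euclNorm x ≤ 1 ∧ c = euclNorm (A.mulVec x)}) :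
    c ≤ frobNorm A := by
  obtain ⟨x, hx, rfl⟩ := hc
  have h1 : vsq (A *ᵥ x) ≤ fsq A := by
    have := vsq_mulVec_le_fsq A x
    nlinarith [vsq_le_one hx, fsq_nonneg A, vsq_nonneg x]
  rw [euclNorm_eq, frobNorm_eq]
  exact Real.sqrt_le_sqrt h1

lemma specSet_bddAbove {m n : ℕ} (A : Matrix (Fin m) (Fin n) ℝ) :
    BddAbove {c : ℝ | ∃ x : Fin n → ℝ, euclNorm x ≤ 1 ∧ c = euclNorm (A.mulVec x)} :=
  ⟨frobNorm A, fun _ hc => specSet_le_frob A hc⟩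

lemma le_specNorm {m n : ℕ} (A : Matrix (Fin m) (Fin n) ℝ) (x : Fin n → ℝ)
    (hx : euclNorm x ≤ 1) : euclNorm (A *ᵥ x) ≤ specNorm A :=
  le_csSup (specSet_bddAbove A) ⟨x, hx, rfl⟩

lemma specNorm_nonneg {m n : ℕ} (A : Matrix (Fin m) (Fin n) ℝ) : 0 ≤ specNorm A := by
  have h0 : euclNorm (0 : Fin n → ℝ) ≤ 1 := by
    simp [euclNorm]
  exact le_trans (euclNorm_nonneg _) (le_specNorm A 0 h0)

lemma specNorm_le_frobNorm {m n : ℕ} (A : Matrix (Fin m) (Fin n) ℝ) :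
    specNorm A ≤ frobNorm A := by
  apply Real.sSup_le _ (frobNorm_nonneg A)
  intro c hc
  exact specSet_le_frob A hc

lemma euclNorm_smul {p : ℕ} (c : ℝ) (x : Fin p → ℝ) :
    euclNorm (c • x) = |c| * euclNorm x := by
  unfold euclNorm
  simp only [Pi.smul_apply, smul_eq_mul, mul_pow]
  rw [← Finset.mul_sum, Real.sqrt_mul (sq_nonneg c), Real.sqrt_sq_eq_abs]

lemma euclNorm_mulVec_le {m n : ℕ} (A : Matrix (Fin m) (Fin n) ℝ) (x : Fin n → ℝ) :
    euclNorm (A *ᵥ x) ≤ specNorm A * euclNorm x := by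
  rcases eq_or_ne (euclNorm x) 0 with h0 | h0
  · have hvsq : vsq x = 0 := by rw [← euclNorm_sq, h0]; ring
    have hx : x = 0 := by
      funext i
      have hz := (Finset.sum_eq_zero_iff_of_nonneg (fun j _ => sq_nonneg (x j))).mp hvsq
      have := hz i (Finset.mem_univ i)
      exact pow_eq_zero_iff (n := 2) (by norm_num) |>.mp this
    rw [hx, mulVec_zero]
    simp [euclNorm]
  · have hpos : 0 < euclNorm x := lt_of_le_of_ne (euclNorm_nonneg x) (Ne.symm h0)
    have h1 : euclNorm ((euclNorm x)⁻¹ • x) = 1 := by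
      rw [euclNorm_smul, abs_of_pos (inv_pos.2 hpos)]
      field_simp
    have h2 := le_specNorm A ((euclNorm x)⁻¹ • x) h1.le
    have h3 : A *ᵥ ((euclNorm x)⁻¹ • x) = (euclNorm x)⁻¹ • (A *ᵥ x) := by
      rw [mulVec_smul]
    rw [h3, euclNorm_smul, abs_of_pos (inv_pos.2 hpos)] at h2
    calc euclNorm (A *ᵥ x)
        = euclNorm x * ((euclNorm x)⁻¹ * euclNorm (A *ᵥ x)) := by field_simp
      _ ≤ euclNorm x * specNorm A := by
          exact mul_le_mul_of_nonneg_left h2 hpos.le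
      _ = specNorm A * euclNorm x := mul_comm _ _

lemma col_mul {m r n : ℕ} (A : Matrix (Fin m) (Fin r) ℝ) (M : Matrix (Fin r) (Fin n) ℝ)
    (j : Fin n) : (fun i => (A * M) i j) = A *ᵥ (fun k => M k j) := by
  funext i; simp [mul_apply, mulVec, dotProduct]

lemma fsq_eq_sum_cols {m n : ℕ} (A : Matrix (Fin m) (Fin n) ℝ) :
    fsq A = ∑ j, vsq (fun i => A i j) := by
  unfold fsq vsq; exact Finset.sum_comm

lemma frobNorm_mul_le {m r n : ℕ} (A : Matrix (Fin m) (Fin r) ℝ)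
    (M : Matrix (Fin r) (Fin n) ℝ) : frobNorm (A * M) ≤ specNorm A * frobNorm M := by
  have hsq : fsq (A * M) ≤ specNorm A ^ 2 * fsq M := by
    rw [fsq_eq_sum_cols, fsq_eq_sum_cols, Finset.mul_sum]
    apply Finset.sum_le_sum; intro j _
    rw [col_mul]
    have h := euclNorm_mulVec_le A (fun k => M k j)
    have h2 : euclNorm (A *ᵥ fun k => M k j) ^ 2 ≤ (specNorm A * euclNorm fun k => M k j) ^ 2 :=
      pow_le_pow_left₀ (euclNorm_nonneg _) h 2
    rw [euclNorm_sq, mul_pow, euclNorm_sq] at h2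
    exact h2
  rw [frobNorm_eq, frobNorm_eq]
  calc Real.sqrt (fsq (A * M)) ≤ Real.sqrt (specNorm A ^ 2 * fsq M) := Real.sqrt_le_sqrt hsq
    _ = specNorm A * Real.sqrt (fsq M) := by
        rw [Real.sqrt_mul (sq_nonneg _), Real.sqrt_sq (specNorm_nonneg A)]

lemma frobNorm_orth_mul {p k n : ℕ} (W : Matrix (Fin p) (Fin k) ℝ) (hW : Wᵀ * W = 1)
    (M : Matrix (Fin k) (Fin n) ℝ) : frobNorm (W * M) = frobNorm M := by
  rw [frobNorm_eq, frobNorm_eq]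
  congr 1
  rw [fsq_eq_sum_cols, fsq_eq_sum_cols]
  apply Finset.sum_congr rfl; intro j _
  rw [col_mul]
  exact vsq_orth_mulVec W hW _

lemma row_mul {m k : ℕ} (E : Matrix (Fin m) (Fin k) ℝ) (Q : Matrix (Fin k) (Fin k) ℝ)
    (i : Fin m) : (fun j => (E * Q) i j) = Qᵀ *ᵥ (fun k => E i k) := by
  funext j; simp [mul_apply, mulVec, dotProduct, transpose_apply, mul_comm]

lemma frobNorm_mul_proj_le {m k : ℕ} (E : Matrix (Fin m) (Fin k) ℝ)
    (Q : Matrix (Fin k) (Fin k) ℝ) (hQt : Qᵀ = Q) (hQ2 : Q * Q = Q) :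
    frobNorm (E * Q) ≤ frobNorm E := by
  rw [frobNorm_eq, frobNorm_eq]
  apply Real.sqrt_le_sqrt
  unfold fsq
  apply Finset.sum_le_sum; intro i _
  have hrow : (fun j => (E * Q) i j) = Q *ᵥ (fun k => E i k) := by
    rw [row_mul, hQt]
  have h : (∑ j, (E * Q) i j ^ 2) = vsq (Q *ᵥ (fun k => E i k)) := by
    unfold vsq
    exact Finset.sum_congr rfl fun j _ => by rw [congrFun hrow j]
  rw [h]
  exact vsq_proj_le Q hQt hQ2 _

lemma frobNorm_neg {m n : ℕ} (A : Matrix (Fin m) (Fin n) ℝ) : frobNorm (-A) = frobNorm A := by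
  simp [frobNorm]

lemma euclNorm_neg {p : ℕ} (x : Fin p → ℝ) : euclNorm (-x) = euclNorm x := by
  simp [euclNorm]

lemma specNorm_neg {m n : ℕ} (A : Matrix (Fin m) (Fin n) ℝ) : specNorm (-A) = specNorm A := by
  unfold specNorm
  congr 1
  ext c
  constructor
  · rintro ⟨x, hx, rfl⟩; exact ⟨x, hx, by rw [neg_mulVec, euclNorm_neg]⟩
  · rintro ⟨x, hx, rfl⟩; exact ⟨x, hx, by rw [neg_mulVec, euclNorm_neg]⟩

/-- Key lemma (Lemma 1): for rank-`r` matrices `X_l` (with tangent space `S_l`)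
and `X`, `‖(I − P_{S_l})(X)‖_F ≤ ‖X_l − X‖₂ ‖X_l − X‖_F / σ_min(X)
≤ ‖X_l − X‖_F² / σ_min(X)`. -/
theorem tangent_proj_error {m n r : ℕ}
    (hr : 0 < r)
    (Xl : Matrix (Fin m) (Fin n) ℝ) (hrankXl : Xl.rank = r)
    (Ul : Matrix (Fin m) (Fin r) ℝ) (Vl : Matrix (Fin n) (Fin r) ℝ)
    (Sl : Matrix (Fin r) (Fin r) ℝ)
    (hUl : Ulᵀ * Ul = 1) (hVl : Vlᵀ * Vl = 1)
    (hSl : Sl.IsDiag ∧ ∀ i, 0 < Sl i i) (hXlsvd : Xl = Ul * Sl * Vlᵀ)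
    (X : Matrix (Fin m) (Fin n) ℝ) (hrankX : X.rank = r)
    (UX : Matrix (Fin m) (Fin r) ℝ) (VX : Matrix (Fin n) (Fin r) ℝ)
    (SX : Matrix (Fin r) (Fin r) ℝ)
    (hUX : UXᵀ * UX = 1) (hVX : VXᵀ * VX = 1)
    (hSX : SX.IsDiag ∧ ∀ i, 0 < SX i i) (hXsvd : X = UX * SX * VXᵀ) :
    frobNorm (X - tangentProj Ul Vl X) ≤
      (1 / (⨅ i, SX i i)) * specNorm (Xl - X) * frobNorm (Xl - X) ∧
    (1 / (⨅ i, SX i i)) * specNorm (Xl - X) * frobNorm (Xl - X) ≤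
      (1 / (⨅ i, SX i i)) * (frobNorm (Xl - X)) ^ 2 := by
  obtain ⟨hSXdiag, hSXpos⟩ := hSX
  haveI : NeZero r := ⟨hr.ne'⟩
  set σ := ⨅ i, SX i i with hσdef
  have hσpos : 0 < σ := by
    obtain ⟨i, hi⟩ := exists_eq_ciInf_of_finite (f := fun i => SX i i)
    rw [hσdef, ← hi]; exact hSXpos i
  have hσle : ∀ i, σ ≤ SX i i := fun i =>
    ciInf_le (Set.Finite.bddBelow (Set.finite_range _)) i
  have hSXeq : SX = Matrix.diagonal (fun i => SX i i) := by
    ext i j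
    by_cases h : i = j
    · subst h; simp
    · rw [Matrix.diagonal_apply_ne _ h]; exact hSXdiag h
  set D := Matrix.diagonal (fun i => (SX i i)⁻¹) with hD
  have hSD : SX * D = 1 := by
    rw [hSXeq, hD, diagonal_mul_diagonal]
    have he : (fun i => SX i i * (SX i i)⁻¹) = fun _ => (1:ℝ) :=
      funext fun i => mul_inv_cancel₀ (hSXpos i).ne'
    rw [he, Matrix.diagonal_one]
  set QU := (1 : Matrix (Fin m) (Fin m) ℝ) - Ul * Ulᵀ with hQU
  set QV := (1 : Matrix (Fin n) (Fin n) ℝ) - Vl * Vlᵀ with hQV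
  have hQUt : QUᵀ = QU := by
    rw [hQU, transpose_sub, transpose_one, transpose_mul, transpose_transpose]
  have hQVt : QVᵀ = QV := by
    rw [hQV, transpose_sub, transpose_one, transpose_mul, transpose_transpose]
  have hUUsq : (Ul * Ulᵀ) * (Ul * Ulᵀ) = Ul * Ulᵀ := by
    rw [Matrix.mul_assoc, ← Matrix.mul_assoc Ulᵀ Ul Ulᵀ, hUl, Matrix.one_mul]
  have hVVsq : (Vl * Vlᵀ) * (Vl * Vlᵀ) = Vl * Vlᵀ := by
    rw [Matrix.mul_assoc, ← Matrix.mul_assoc Vlᵀ Vl Vlᵀ, hVl, Matrix.one_mul]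
  have hQU2 : QU * QU = QU := by
    rw [hQU, Matrix.sub_mul, Matrix.mul_sub, Matrix.mul_sub, hUUsq]
    simp only [Matrix.one_mul, Matrix.mul_one]
    abel
  have hQV2 : QV * QV = QV := by
    rw [hQV, Matrix.sub_mul, Matrix.mul_sub, Matrix.mul_sub, hVVsq]
    simp only [Matrix.one_mul, Matrix.mul_one]
    abel
  have hQUXl : QU * Xl = 0 := by
    have key : Ul * Ulᵀ * (Ul * Sl * Vlᵀ) = Ul * Sl * Vlᵀ := by
      simp only [Matrix.mul_assoc]
      rw [← Matrix.mul_assoc Ulᵀ Ul, hUl, Matrix.one_mul]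
    rw [hQU, hXlsvd, Matrix.sub_mul, Matrix.one_mul, key, sub_self]
  have hXlQV : Xl * QV = 0 := by
    have key : Ul * Sl * Vlᵀ * (Vl * Vlᵀ) = Ul * Sl * Vlᵀ := by
      simp only [Matrix.mul_assoc]
      rw [← Matrix.mul_assoc Vlᵀ Vl, hVl, Matrix.one_mul]
    rw [hQV, hXlsvd, Matrix.mul_sub, Matrix.mul_one, key, sub_self]
  set B := QU * UX with hB
  set Mm := SX * VXᵀ * QV with hMm
  have hfactor : X - tangentProj Ul Vl X = B * Mm := by
    have h1 : X - tangentProj Ul Vl X = QU * X * QV := by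
      rw [hQU, hQV]
      unfold tangentProj
      simp only [Matrix.sub_mul, Matrix.mul_sub, Matrix.one_mul, Matrix.mul_one]
      abel
    rw [h1, hXsvd, hB, hMm]
    simp only [Matrix.mul_assoc]
  have hUXeq : X * (VX * D) = UX := by
    rw [hXsvd]
    simp only [Matrix.mul_assoc]
    rw [← Matrix.mul_assoc VXᵀ VX D, hVX, Matrix.one_mul, hSD, Matrix.mul_one]
  have hBeq : B = QU * (X - Xl) * (VX * D) := by
    have h1 : QU * (X - Xl) = QU * X := by rw [Matrix.mul_sub, hQUXl, sub_zero]
    rw [hB, ← hUXeq, h1, ← Matrix.mul_assoc]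
  -- spectral norm bound on B
  have hspecB : specNorm B ≤ σ⁻¹ * specNorm (Xl - X) := by
    have hspec0 : (0:ℝ) ≤ σ⁻¹ * specNorm (Xl - X) :=
      mul_nonneg (inv_nonneg.2 hσpos.le) (specNorm_nonneg _)
    apply Real.sSup_le _ hspec0
    rintro c ⟨x, hx, rfl⟩
    have hDx : euclNorm (D *ᵥ x) ≤ σ⁻¹ := by
      have hvsq : vsq (D *ᵥ x) ≤ σ⁻¹ ^ 2 := by
        unfold vsq
        calc ∑ i, ((D *ᵥ x) i) ^ 2 = ∑ i, ((SX i i)⁻¹ * x i) ^ 2 := by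
              apply Finset.sum_congr rfl; intro i _
              rw [hD, mulVec_diagonal]
          _ ≤ ∑ i, σ⁻¹ ^ 2 * x i ^ 2 := by
              apply Finset.sum_le_sum; intro i _
              rw [mul_pow]
              apply mul_le_mul_of_nonneg_right _ (sq_nonneg _)
              exact pow_le_pow_left₀ (inv_nonneg.2 (hSXpos i).le)
                (inv_anti₀ hσpos (hσle i)) 2
          _ = σ⁻¹ ^ 2 * vsq x := by rw [← Finset.mul_sum]; rfl
          _ ≤ σ⁻¹ ^ 2 * 1 := by
              exact mul_le_mul_of_nonneg_left (vsq_le_one hx) (sq_nonneg _)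
          _ = σ⁻¹ ^ 2 := mul_one _
      calc euclNorm (D *ᵥ x) = Real.sqrt (vsq (D *ᵥ x)) := rfl
        _ ≤ Real.sqrt (σ⁻¹ ^ 2) := Real.sqrt_le_sqrt hvsq
        _ = σ⁻¹ := Real.sqrt_sq (inv_nonneg.2 hσpos.le)
    have hchain : B *ᵥ x = QU *ᵥ ((X - Xl) *ᵥ (VX *ᵥ (D *ᵥ x))) := by
      rw [hBeq]
      simp only [mulVec_mulVec]
      rw [Matrix.mul_assoc]
    rw [hchain]
    calc euclNorm (QU *ᵥ ((X - Xl) *ᵥ (VX *ᵥ (D *ᵥ x))))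
        ≤ euclNorm ((X - Xl) *ᵥ (VX *ᵥ (D *ᵥ x))) := euclNorm_proj_le QU hQUt hQU2 _
      _ ≤ specNorm (X - Xl) * euclNorm (VX *ᵥ (D *ᵥ x)) := euclNorm_mulVec_le _ _
      _ = specNorm (X - Xl) * euclNorm (D *ᵥ x) := by rw [euclNorm_orth_mulVec VX hVX]
      _ ≤ specNorm (X - Xl) * σ⁻¹ :=
          mul_le_mul_of_nonneg_left hDx (specNorm_nonneg _)
      _ = σ⁻¹ * specNorm (Xl - X) := by
          rw [(neg_sub Xl X).symm, specNorm_neg, mul_comm]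
  -- Frobenius bound on Mm
  have hMfrob : frobNorm Mm ≤ frobNorm (Xl - X) := by
    have h1 : frobNorm Mm = frobNorm (UX * Mm) := (frobNorm_orth_mul UX hUX Mm).symm
    have h2 : UX * Mm = (X - Xl) * QV := by
      have h3 : (X - Xl) * QV = X * QV := by rw [Matrix.sub_mul, hXlQV, sub_zero]
      rw [h3, hXsvd, hMm]
      simp only [Matrix.mul_assoc]
    rw [h1, h2]
    calc frobNorm ((X - Xl) * QV) ≤ frobNorm (X - Xl) := frobNorm_mul_proj_le _ _ hQVt hQV2
      _ = frobNorm (Xl - X) := by rw [(neg_sub Xl X).symm, frobNorm_neg]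
  constructor
  · rw [hfactor]
    calc frobNorm (B * Mm) ≤ specNorm B * frobNorm Mm := frobNorm_mul_le _ _
      _ ≤ (σ⁻¹ * specNorm (Xl - X)) * frobNorm (Xl - X) := by
          apply mul_le_mul hspecB hMfrob (frobNorm_nonneg _)
          exact mul_nonneg (inv_nonneg.2 hσpos.le) (specNorm_nonneg _)
      _ = (1 / σ) * specNorm (Xl - X) * frobNorm (Xl - X) := by rw [one_div]
  · have hsf : specNorm (Xl - X) ≤ frobNorm (Xl - X) := specNorm_le_frobNorm _
    have h := mul_le_mul_of_nonneg_right hsf (frobNorm_nonneg (Xl - X))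
    have hinv : (0:ℝ) ≤ 1 / σ := div_nonneg zero_le_one hσpos.le
    have h2 := mul_le_mul_of_nonneg_left h hinv
    calc (1 / σ) * specNorm (Xl - X) * frobNorm (Xl - X)
        = (1 / σ) * (specNorm (Xl - X) * frobNorm (Xl - X)) := mul_assoc _ _ _
      _ ≤ (1 / σ) * (frobNorm (Xl - X) * frobNorm (Xl - X)) := h2
      _ = (1 / σ) * frobNorm (Xl - X) ^ 2 := by ring
end

section
/- Let X_l = U_l Σ_l V_l^* and X = U Σ V^* be two m×n matrices of rank r, given by their reduced singular value decompositions (so U_l, U ∈ ℝ^{m×r} and V_l, V ∈ ℝ^{n×r} have orthonormal columns and Σ_l, Σ are r×r diagonal with positive diagonal entries). Then ‖U_l U_l^* − U U^*‖_2 ≤ ‖X_l − X‖_2 / σ_min(X) and ‖V_l V_l^* − V V^*‖_2 ≤ ‖X_l − X‖_2 / σ_min(X). -/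
open Matrix BigOperators

/-!
Write `P_l = U_l U_lᵀ` and `P = U Uᵀ`. Since `1 - P_l` annihilates `X_l` and `X V Σ⁻¹ = U`, we get
`(1 - P_l) U = (1 - P_l) (X - X_l) V Σ⁻¹`, hence `‖(1 - P_l) U‖ ≤ ‖X_l - X‖ / σ_min(X)`. Both
subspaces have dimension `r`, so the square matrix `U_lᵀ U` and its transpose have the same smallest
singular value, which gives `‖(1 - P) U_l‖ ≤ ‖(1 - P_l) U‖`. Finally
`P_l - P = P_l (1 - P) - (1 - P_l) P` maps every vector to a sum of two orthogonal pieces, each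
controlled by one of these two norms. The bound for `V` is the same statement for the transposes.
-/

open scoped Matrix.Norms.L2Operator

namespace Matrix

variable {l m n : Type*} [Fintype l] [Fintype m] [Fintype n]

lemma mulVec_dotProduct_mulVec (M : Matrix m n ℝ) (N : Matrix m l ℝ) (x : n → ℝ) (y : l → ℝ) :
    (M *ᵥ x) ⬝ᵥ (N *ᵥ y) = x ⬝ᵥ ((Mᵀ * N) *ᵥ y) := by
  rw [← mulVec_mulVec, dotProduct_mulVec x Mᵀ, vecMul_transpose]

lemma norm_toLp_sq (x : n → ℝ) : ‖(WithLp.toLp 2 x : EuclideanSpace ℝ n)‖ ^ 2 = x ⬝ᵥ x := by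
  rw [← real_inner_self_eq_norm_sq, EuclideanSpace.inner_toLp_toLp, star_trivial]

lemma dotProduct_self_nonneg (x : n → ℝ) : 0 ≤ x ⬝ᵥ x :=
  Finset.sum_nonneg fun i _ => mul_self_nonneg (x i)

lemma sq_l2_opNorm_le_iff [DecidableEq n] {A : Matrix m n ℝ} {c : ℝ} (hc : 0 ≤ c) :
    ‖A‖ ^ 2 ≤ c ↔ ∀ x, (A *ᵥ x) ⬝ᵥ (A *ᵥ x) ≤ c * (x ⬝ᵥ x) := by
  constructor
  · intro hA x
    rw [← norm_toLp_sq, ← norm_toLp_sq]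
    calc ‖(WithLp.toLp 2 (A *ᵥ x) : EuclideanSpace ℝ m)‖ ^ 2
        ≤ (‖A‖ * ‖(WithLp.toLp 2 x : EuclideanSpace ℝ n)‖) ^ 2 :=
          pow_le_pow_left₀ (norm_nonneg _) (A.l2_opNorm_mulVec _) 2
      _ ≤ c * ‖(WithLp.toLp 2 x : EuclideanSpace ℝ n)‖ ^ 2 := by
          rw [mul_pow]; exact mul_le_mul_of_nonneg_right hA (sq_nonneg _)
  · intro hA
    have hle : ‖A‖ ≤ √c := by
      refine ContinuousLinearMap.opNorm_le_bound _ (Real.sqrt_nonneg c) fun x => ?_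
      rw [← Real.sqrt_sq (norm_nonneg _), ← Real.sqrt_sq (norm_nonneg x), ← Real.sqrt_mul hc]
      refine Real.sqrt_le_sqrt ?_
      rw [show x = WithLp.toLp 2 x.ofLp from rfl, norm_toLp_sq, norm_toLp_sq]
      exact hA _
    calc ‖A‖ ^ 2 ≤ √c ^ 2 := pow_le_pow_left₀ (norm_nonneg _) hle 2
      _ = c := Real.sq_sqrt hc

lemma l2_opNorm_le_iff [DecidableEq n] {A : Matrix m n ℝ} {c : ℝ} (hc : 0 ≤ c) :
    ‖A‖ ≤ c ↔ ∀ x, (A *ᵥ x) ⬝ᵥ (A *ᵥ x) ≤ c ^ 2 * (x ⬝ᵥ x) := by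
  rw [← sq_l2_opNorm_le_iff (sq_nonneg c), sq_le_sq₀ (norm_nonneg A) hc]

lemma l2_opNorm_transpose [DecidableEq m] [DecidableEq n] (A : Matrix m n ℝ) : ‖Aᵀ‖ = ‖A‖ := by
  rw [← conjTranspose_eq_transpose_of_trivial, l2_opNorm_conjTranspose]

lemma IsStarProjection.transpose_eq {P : Matrix n n ℝ} (hP : IsStarProjection P) : Pᵀ = P := by
  rw [← conjTranspose_eq_transpose_of_trivial, ← star_eq_conjTranspose, hP.isSelfAdjoint.star_eq]

lemma IsStarProjection.mulVec_dotProduct_mulVec {P : Matrix n n ℝ} (hP : IsStarProjection P)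
    (x y : n → ℝ) : (P *ᵥ x) ⬝ᵥ (P *ᵥ y) = x ⬝ᵥ (P *ᵥ y) := by
  rw [Matrix.mulVec_dotProduct_mulVec, hP.transpose_eq, hP.isIdempotentElem.eq]

lemma IsStarProjection.mulVec_dotProduct_one_sub_mulVec [DecidableEq n] {P : Matrix n n ℝ}
    (hP : IsStarProjection P) (x y : n → ℝ) : (P *ᵥ x) ⬝ᵥ ((1 - P) *ᵥ y) = 0 := by
  rw [Matrix.mulVec_dotProduct_mulVec, hP.transpose_eq, hP.mul_one_sub_self, zero_mulVec,
    dotProduct_zero]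

lemma IsStarProjection.dotProduct_self_eq_add [DecidableEq n] {P : Matrix n n ℝ}
    (hP : IsStarProjection P) (x : n → ℝ) :
    x ⬝ᵥ x = (P *ᵥ x) ⬝ᵥ (P *ᵥ x) + ((1 - P) *ᵥ x) ⬝ᵥ ((1 - P) *ᵥ x) := by
  rw [hP.mulVec_dotProduct_mulVec, hP.one_sub.mulVec_dotProduct_mulVec, sub_mulVec, one_mulVec,
    dotProduct_sub]
  ring

-- `(Q - P) x = Q (1 - P) x - (1 - Q) P x` with orthogonal summands bounded by `c ‖(1 - P) x‖` and
-- `c ‖P x‖`.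
lemma IsStarProjection.norm_sub_le [DecidableEq n] {P Q : Matrix n n ℝ}
    (hP : IsStarProjection P) (hQ : IsStarProjection Q) {c : ℝ}
    (hQP : ‖Q * (1 - P)‖ ≤ c) (hPQ : ‖(1 - Q) * P‖ ≤ c) : ‖Q - P‖ ≤ c := by
  have hc : 0 ≤ c := (norm_nonneg _).trans hQP
  rw [l2_opNorm_le_iff hc] at hQP hPQ ⊢
  intro x
  set u := Q *ᵥ ((1 - P) *ᵥ x)
  set v := (1 - Q) *ᵥ (P *ᵥ x)
  have hu : u ⬝ᵥ u ≤ c ^ 2 * (((1 - P) *ᵥ x) ⬝ᵥ ((1 - P) *ᵥ x)) := by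
    have h := hQP ((1 - P) *ᵥ x)
    rwa [mulVec_mulVec, Matrix.mul_assoc, hP.one_sub.isIdempotentElem.eq, ← mulVec_mulVec] at h
  have hv : v ⬝ᵥ v ≤ c ^ 2 * ((P *ᵥ x) ⬝ᵥ (P *ᵥ x)) := by
    have h := hPQ (P *ᵥ x)
    rwa [mulVec_mulVec, Matrix.mul_assoc, hP.isIdempotentElem.eq, ← mulVec_mulVec] at h
  have huv : u ⬝ᵥ v = 0 := hQ.mulVec_dotProduct_one_sub_mulVec _ _
  have hsplit : (Q - P) *ᵥ x = u - v := by
    simp only [u, v, mulVec_mulVec, ← sub_mulVec]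
    congr 1
    noncomm_ring
  calc ((Q - P) *ᵥ x) ⬝ᵥ ((Q - P) *ᵥ x) = u ⬝ᵥ u + v ⬝ᵥ v := by
        rw [hsplit, sub_dotProduct, dotProduct_sub, dotProduct_sub, huv, dotProduct_comm v u, huv]
        ring
    _ ≤ c ^ 2 * (x ⬝ᵥ x) := by
        rw [hP.dotProduct_self_eq_add x]
        linarith

lemma le_dotProduct_transpose_mulVec_self {r : Type*} [Fintype r] [DecidableEq r]
    {A : Matrix r r ℝ} {τ : ℝ} (h : ∀ z, τ * (z ⬝ᵥ z) ≤ (A *ᵥ z) ⬝ᵥ (A *ᵥ z)) (y : r → ℝ) :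
    τ * (y ⬝ᵥ y) ≤ (Aᵀ *ᵥ y) ⬝ᵥ (Aᵀ *ᵥ y) := by
  rcases le_or_gt τ 0 with hτ | hτ
  · exact (mul_nonpos_of_nonpos_of_nonneg hτ (dotProduct_self_nonneg y)).trans
      (dotProduct_self_nonneg _)
  have hinj : Function.Injective A.mulVec := fun z w hzw => by
    have h0 := h (z - w)
    rw [mulVec_sub, hzw, sub_self, dotProduct_zero] at h0
    exact sub_eq_zero.mp (dotProduct_self_eq_zero.mp
      (le_antisymm (nonpos_of_mul_nonpos_right h0 hτ) (dotProduct_self_nonneg _)))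
  have hdet : IsUnit A.det := (isUnit_iff_isUnit_det A).mp (mulVec_injective_iff_isUnit.mp hinj)
  have hinv : ‖(A⁻¹)ᵀ‖ ^ 2 ≤ τ⁻¹ := by
    rw [l2_opNorm_transpose, sq_l2_opNorm_le_iff (inv_nonneg.2 hτ.le)]
    intro x
    have hx := h (A⁻¹ *ᵥ x)
    rw [mulVec_mulVec, mul_nonsing_inv A hdet, one_mulVec] at hx
    exact (le_inv_mul_iff₀ hτ).2 hx
  have hy := (sq_l2_opNorm_le_iff (inv_nonneg.2 hτ.le)).1 hinv (Aᵀ *ᵥ y)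
  rw [mulVec_mulVec, ← transpose_mul, mul_nonsing_inv A hdet, transpose_one, one_mulVec] at hy
  exact (le_inv_mul_iff₀ hτ).1 hy

section OrthonormalColumns

variable {r : Type*} [Fintype r] [DecidableEq r] {W Y : Matrix m r ℝ}

lemma isStarProjection_mul_transpose (hW : Wᵀ * W = 1) : IsStarProjection (W * Wᵀ) where
  isIdempotentElem := by
    rw [IsIdempotentElem, Matrix.mul_assoc, ← Matrix.mul_assoc Wᵀ, hW, Matrix.one_mul]
  isSelfAdjoint := by
    rw [IsSelfAdjoint, star_eq_conjTranspose, conjTranspose_eq_transpose_of_trivial, transpose_mul,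
      transpose_transpose]

lemma l2_opNorm_le_one_of_transpose_mul_self (hW : Wᵀ * W = 1) : ‖W‖ ≤ 1 := by
  rw [l2_opNorm_le_iff zero_le_one]
  intro x
  rw [mulVec_dotProduct_mulVec, hW, one_mulVec, one_pow, one_mul]

lemma l2_opNorm_mul_transpose_le [DecidableEq m] (hW : Wᵀ * W = 1)
    (Z : Matrix l r ℝ) : ‖Z * Wᵀ‖ ≤ ‖Z‖ :=
  (l2_opNorm_mul _ _).trans <| mul_le_of_le_one_right (norm_nonneg _) <| by
    rw [l2_opNorm_transpose]; exact l2_opNorm_le_one_of_transpose_mul_self hW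

lemma one_sub_mul_transpose_mul_dotProduct [DecidableEq m] (hW : Wᵀ * W = 1) (hY : Yᵀ * Y = 1)
    (z : r → ℝ) :
    (((1 - W * Wᵀ) * Y) *ᵥ z) ⬝ᵥ (((1 - W * Wᵀ) * Y) *ᵥ z)
      = z ⬝ᵥ z - ((Wᵀ * Y) *ᵥ z) ⬝ᵥ ((Wᵀ * Y) *ᵥ z) := by
  rw [← mulVec_mulVec, (isStarProjection_mul_transpose hW).one_sub.mulVec_dotProduct_mulVec,
    sub_mulVec, one_mulVec, dotProduct_sub]
  congr 1
  · rw [mulVec_dotProduct_mulVec, hY, one_mulVec]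
  · rw [← mulVec_mulVec, dotProduct_mulVec, ← mulVec_transpose, mulVec_mulVec]

-- This is where equal dimensions are needed: a lower bound on the square matrix `Wᵀ Y` passes to
-- its transpose `Yᵀ W`.
lemma l2_opNorm_one_sub_mul_transpose_mul_le_swap [DecidableEq m] (hW : Wᵀ * W = 1)
    (hY : Yᵀ * Y = 1) : ‖(1 - Y * Yᵀ) * W‖ ≤ ‖(1 - W * Wᵀ) * Y‖ := by
  set s := ‖(1 - W * Wᵀ) * Y‖
  have hs := (l2_opNorm_le_iff (norm_nonneg _)).1 (le_refl s)
  have hlow : ∀ z, (1 - s ^ 2) * (z ⬝ᵥ z) ≤ ((Wᵀ * Y) *ᵥ z) ⬝ᵥ ((Wᵀ * Y) *ᵥ z) := fun z => by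
    have hz := hs z
    rw [one_sub_mul_transpose_mul_dotProduct hW hY] at hz
    linarith
  rw [l2_opNorm_le_iff (norm_nonneg _)]
  intro y
  have hy := le_dotProduct_transpose_mulVec_self hlow y
  rw [transpose_mul, transpose_transpose] at hy
  rw [one_sub_mul_transpose_mul_dotProduct hY hW]
  linarith

lemma l2_opNorm_mul_transpose_sub_le [DecidableEq m] (hW : Wᵀ * W = 1) (hY : Yᵀ * Y = 1) :
    ‖W * Wᵀ - Y * Yᵀ‖ ≤ ‖(1 - W * Wᵀ) * Y‖ := by
  have hPY := isStarProjection_mul_transpose hY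
  refine hPY.norm_sub_le (isStarProjection_mul_transpose hW) ?_ ?_
  · calc ‖W * Wᵀ * (1 - Y * Yᵀ)‖ = ‖(1 - Y * Yᵀ) * W * Wᵀ‖ := by
          rw [← l2_opNorm_transpose, transpose_mul, transpose_mul, hPY.one_sub.transpose_eq,
            transpose_transpose, Matrix.mul_assoc]
      _ ≤ ‖(1 - Y * Yᵀ) * W‖ := l2_opNorm_mul_transpose_le hW _
      _ ≤ ‖(1 - W * Wᵀ) * Y‖ := l2_opNorm_one_sub_mul_transpose_mul_le_swap hW hY
  · rw [← Matrix.mul_assoc]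
    exact l2_opNorm_mul_transpose_le hY _

end OrthonormalColumns

lemma l2_opNorm_diagonal_inv_le {r : Type*} [Fintype r] [DecidableEq r] {d : r → ℝ}
    (hd : ∀ i, 0 < d i) : ‖diagonal d⁻¹‖ ≤ (⨅ i, d i)⁻¹ := by
  have hσ : 0 ≤ ⨅ i, d i := Real.iInf_nonneg fun i => (hd i).le
  rw [l2_opNorm_diagonal, pi_norm_le_iff_of_nonneg (inv_nonneg.2 hσ)]
  intro i
  have : Nonempty r := ⟨i⟩
  obtain ⟨j, hj⟩ := Finite.exists_min d
  have hmin : 0 < ⨅ i, d i := (hd j).trans_le (le_ciInf hj)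
  rw [Pi.inv_apply, norm_inv, Real.norm_of_nonneg (hd i).le]
  exact inv_anti₀ hmin (ciInf_le (Set.finite_range d).bddBelow i)

lemma l2_opNorm_one_sub_mul_transpose_mul_le_div {k r : Type*} [Fintype k] [Fintype r]
    [DecidableEq k] [DecidableEq m] [DecidableEq n] [DecidableEq r] {Ul : Matrix m k ℝ}
    (hUl : Ulᵀ * Ul = 1) (M : Matrix k n ℝ) (U : Matrix m r ℝ) {S : Matrix r r ℝ} (hS : S.IsDiag)
    (hpos : ∀ i, 0 < S i i) {V : Matrix n r ℝ} (hV : Vᵀ * V = 1) :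
    ‖(1 - Ul * Ulᵀ) * U‖ ≤ ‖Ul * M - U * S * Vᵀ‖ / ⨅ i, S i i := by
  have hSS : S * diagonal S.diag⁻¹ = 1 := by
    nth_rw 1 [← hS.diagonal_diag]
    rw [diagonal_mul_diagonal, ← diagonal_one]
    exact congrArg diagonal (funext fun i => mul_inv_cancel₀ (hpos i).ne')
  have hkill : (1 - Ul * Ulᵀ) * Ul = 0 := by
    rw [Matrix.sub_mul, Matrix.one_mul, Matrix.mul_assoc, hUl, Matrix.mul_one, sub_self]
  have hU : (1 - Ul * Ulᵀ) * U
      = (1 - Ul * Ulᵀ) * (U * S * Vᵀ - Ul * M) * (V * diagonal S.diag⁻¹) := by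
    rw [Matrix.mul_sub, ← Matrix.mul_assoc _ Ul, hkill, Matrix.zero_mul, sub_zero]
    simp only [Matrix.mul_assoc]
    rw [← Matrix.mul_assoc Vᵀ, hV, Matrix.one_mul, hSS, Matrix.mul_one]
  have hP : ‖(1 - Ul * Ulᵀ) * (U * S * Vᵀ - Ul * M)‖ ≤ ‖U * S * Vᵀ - Ul * M‖ :=
    (l2_opNorm_mul _ _).trans <| mul_le_of_le_one_left (norm_nonneg _)
      (isStarProjection_mul_transpose hUl).one_sub.norm_le
  have hVS : ‖V * diagonal S.diag⁻¹‖ ≤ (⨅ i, S i i)⁻¹ :=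
    (l2_opNorm_mul _ _).trans <| (mul_le_of_le_one_left (norm_nonneg _)
      (l2_opNorm_le_one_of_transpose_mul_self hV)).trans (l2_opNorm_diagonal_inv_le hpos)
  rw [hU, norm_sub_rev, div_eq_mul_inv]
  exact (l2_opNorm_mul _ _).trans (mul_le_mul hP hVS (norm_nonneg _) (norm_nonneg _))

lemma l2_opNorm_mul_transpose_sub_le_div {r : Type*} [Fintype r] [DecidableEq m]
    [DecidableEq n] [DecidableEq r] {Ul U : Matrix m r ℝ} (hUl : Ulᵀ * Ul = 1) (hU : Uᵀ * U = 1)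
    (M : Matrix r n ℝ) {S : Matrix r r ℝ} (hS : S.IsDiag) (hpos : ∀ i, 0 < S i i)
    {V : Matrix n r ℝ} (hV : Vᵀ * V = 1) :
    ‖Ul * Ulᵀ - U * Uᵀ‖ ≤ ‖Ul * M - U * S * Vᵀ‖ / ⨅ i, S i i :=
  (l2_opNorm_mul_transpose_sub_le hUl hU).trans
    (l2_opNorm_one_sub_mul_transpose_mul_le_div hUl M U hS hpos hV)

end Matrix

lemma euclNorm_eq_norm {p : ℕ} (x : Fin p → ℝ) :
    euclNorm x = ‖(WithLp.toLp 2 x : EuclideanSpace ℝ (Fin p))‖ := by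
  simp [euclNorm, EuclideanSpace.norm_eq]

lemma specNorm_eq_l2_opNorm {m n : ℕ} (A : Matrix (Fin m) (Fin n) ℝ) : specNorm A = ‖A‖ := by
  rw [l2_opNorm_def, ← ContinuousLinearMap.sSup_unitClosedBall_eq_norm, specNorm]
  congr 1
  ext c
  simp only [Set.mem_ofPred_eq, Set.mem_image, Metric.mem_closedBall, dist_zero_right,
    euclNorm_eq_norm]
  constructor
  · rintro ⟨x, hx, rfl⟩
    exact ⟨WithLp.toLp 2 x, hx, rfl⟩
  · rintro ⟨x, hx, rfl⟩
    exact ⟨x.ofLp, hx, rfl⟩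

theorem singular_subspace_spectral_bound_general {m n r : ℕ}
    (Xl X : Matrix (Fin m) (Fin n) ℝ)
    (Ul U : Matrix (Fin m) (Fin r) ℝ) (Vl V : Matrix (Fin n) (Fin r) ℝ)
    (Sl S : Matrix (Fin r) (Fin r) ℝ)
    (hUl : Ulᵀ * Ul = 1) (hVl : Vlᵀ * Vl = 1)
    (hU : Uᵀ * U = 1) (hV : Vᵀ * V = 1)
    (hS : S.IsDiag ∧ ∀ i, 0 < S i i)
    (hXlsvd : Xl = Ul * Sl * Vlᵀ) (hXsvd : X = U * S * Vᵀ) :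
    specNorm (Ul * Ulᵀ - U * Uᵀ) ≤ specNorm (Xl - X) / (⨅ i, S i i) ∧
      specNorm (Vl * Vlᵀ - V * Vᵀ) ≤ specNorm (Xl - X) / (⨅ i, S i i) := by
  obtain ⟨hSdiag, hSpos⟩ := hS
  have hXlX : Xl - X = Ul * (Sl * Vlᵀ) - U * S * Vᵀ := by
    rw [hXlsvd, hXsvd, Matrix.mul_assoc Ul]
  have hXlXT : (Xl - X)ᵀ = Vl * (Slᵀ * Ulᵀ) - V * S * Uᵀ := by
    simp only [hXlX, transpose_sub, transpose_mul, transpose_transpose, hSdiag.isSymm.eq,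
      Matrix.mul_assoc]
  simp only [specNorm_eq_l2_opNorm]
  constructor
  · rw [hXlX]
    exact l2_opNorm_mul_transpose_sub_le_div hUl hU _ hSdiag hSpos hV
  · rw [← l2_opNorm_transpose (Xl - X), hXlXT]
    exact l2_opNorm_mul_transpose_sub_le_div hVl hV _ hSdiag hSpos hU

/-- Lemma 2, spectral-norm part: for rank-`r` matrices `X_l = U_l Σ_l V_lᵀ` and
`X = U Σ Vᵀ`, `‖U_l U_lᵀ − U Uᵀ‖₂ ≤ ‖X_l − X‖₂ / σ_min(X)` and
`‖V_l V_lᵀ − V Vᵀ‖₂ ≤ ‖X_l − X‖₂ / σ_min(X)`. -/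
theorem singular_subspace_spectral_bound {m n r : ℕ}
    (hr : 0 < r)
    (Xl X : Matrix (Fin m) (Fin n) ℝ)
    (hrankXl : Xl.rank = r) (hrankX : X.rank = r)
    (Ul U : Matrix (Fin m) (Fin r) ℝ) (Vl V : Matrix (Fin n) (Fin r) ℝ)
    (Sl S : Matrix (Fin r) (Fin r) ℝ)
    (hUl : Ulᵀ * Ul = 1) (hVl : Vlᵀ * Vl = 1)
    (hU : Uᵀ * U = 1) (hV : Vᵀ * V = 1)
    (hSl : Sl.IsDiag ∧ ∀ i, 0 < Sl i i) (hS : S.IsDiag ∧ ∀ i, 0 < S i i)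
    (hXlsvd : Xl = Ul * Sl * Vlᵀ) (hXsvd : X = U * S * Vᵀ) :
    specNorm (Ul * Ulᵀ - U * Uᵀ) ≤ specNorm (Xl - X) / (⨅ i, S i i) ∧
      specNorm (Vl * Vlᵀ - V * Vᵀ) ≤ specNorm (Xl - X) / (⨅ i, S i i) :=
  singular_subspace_spectral_bound_general Xl X Ul U Vl V Sl S hUl hVl hU hV hS hXlsvd hXsvd
end

section
/- Let 𝒜 : ℝ^{m×n} → ℝ^p be a linear map with restricted isometry constant R_{2r}, let S_l be the tangent space of the rank-r matrix manifold at a rank-r matrix X_l, let G_l and P_{l−1} be m×n matrices with P_{S_l}(P_{l−1}) ≠ 0, and suppose the restart conditions hold: |⟨P_{S_l}(G_l), P_{S_l}(P_{l−1})⟩| ≤ κ_1 ‖P_{S_l}(G_l)‖_F ‖P_{S_l}(P_{l−1})‖_F and ‖P_{S_l}(G_l)‖_F ≤ κ_2 ‖P_{S_l}(P_{l−1})‖_F, for constants 0 < κ_1 < 1 and κ_2 ≥ 1 with (1−R_{2r}) − κ_1(1+R_{2r}) > 0. Define β_l = −⟨𝒜 P_{S_l}(G_l), 𝒜 P_{S_l}(P_{l−1})⟩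 / ‖𝒜 P_{S_l}(P_{l−1})‖_2², P_l = P_{S_l}(G_l) + β_l P_{S_l}(P_{l−1}), and α_l = ⟨P_{S_l}(G_l), P_{S_l}(P_l)⟩ / ‖𝒜 P_{S_l}(P_l)‖_2² (with P_{S_l}(P_l) ≠ 0). Then |α_l − 1| ≤ R_{2r} / ((1 − R_{2r}) − κ_1(1 + R_{2r})). -/
open Matrix BigOperators

/-
Write `g = P_S(G_l)`, `q = P_S(P_{l-1})` and `w = P_S(P_l) = g + β_l q`. The choice of `β_l`
makes `𝒜 w` orthogonal to `𝒜 q`, so `‖𝒜 w‖² = ⟨𝒜 g, 𝒜 w⟩` and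
`α_l - 1 = (⟨g, w⟩ - ⟨𝒜 g, 𝒜 w⟩) / ‖𝒜 w‖²`. Every matrix of `S_l` has rank at most `2r`, so
polarizing the restricted isometry property gives `|⟨𝒜 x, 𝒜 y⟩ - ⟨x, y⟩| ≤ R₂ᵣ ‖x‖ ‖y‖` on `S_l`,
whence `|α_l - 1| ≤ R₂ᵣ ‖g‖ / ((1 - R₂ᵣ) ‖w‖)`. Finally the first restart condition gives
`((1 - R₂ᵣ) - κ₁ (1 + R₂ᵣ)) ‖g‖ ≤ (1 - R₂ᵣ) ‖w‖`: expand
`⟨g, w⟩ ‖𝒜 q‖² = ‖g‖² ‖𝒜 q‖² - ⟨𝒜 g, 𝒜 q⟩ ⟨g, q⟩` and use `⟨g, w⟩ ≤ ‖g‖ ‖w‖`.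
-/

open scoped InnerProductSpace

section RestrictedIsometry

variable {E F : Type*} [NormedAddCommGroup E] [InnerProductSpace ℝ E]
  [NormedAddCommGroup F] [InnerProductSpace ℝ F]

def IsRestrictedIsometryOn (T : E →ₗ[ℝ] F) (S : Submodule ℝ E) (R : ℝ) : Prop :=
  ∀ x ∈ S, (1 - R) * ‖x‖ ^ 2 ≤ ‖T x‖ ^ 2 ∧ ‖T x‖ ^ 2 ≤ (1 + R) * ‖x‖ ^ 2

theorem norm_add_smul_sq_eq_inner {u v : F} {β : ℝ} (hv : v ≠ 0)
    (hβ : β = -⟪u, v⟫_ℝ / ‖v‖ ^ 2) : ‖u + β • v‖ ^ 2 = ⟪u, u + β • v⟫_ℝ := by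
  have hv2 : ‖v‖ ^ 2 ≠ 0 := by positivity
  rw [← real_inner_self_eq_norm_sq, inner_add_left _ _ (u + β • v), real_inner_smul_left,
    inner_add_right v, real_inner_smul_right, real_inner_self_eq_norm_sq, real_inner_comm u, hβ,
    div_mul_cancel₀ _ hv2]
  ring

namespace IsRestrictedIsometryOn

variable {T : E →ₗ[ℝ] F} {S : Submodule ℝ E} {R : ℝ}

theorem nonneg (hT : IsRestrictedIsometryOn T S R) {x : E} (hx : x ∈ S) (hx0 : x ≠ 0) :
    0 ≤ R := by
  obtain ⟨h₁, h₂⟩ := hT x hx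
  have : 0 < ‖x‖ ^ 2 := by positivity
  nlinarith

theorem abs_inner_sub_inner_le_of_norm_eq_one (hT : IsRestrictedIsometryOn T S R) {x y : E}
    (hx : x ∈ S) (hy : y ∈ S) (hx1 : ‖x‖ = 1) (hy1 : ‖y‖ = 1) :
    |⟪T x, T y⟫_ℝ - ⟪x, y⟫_ℝ| ≤ R := by
  obtain ⟨hu₁, hu₂⟩ := hT (x + y) (S.add_mem hx hy)
  obtain ⟨hv₁, hv₂⟩ := hT (x - y) (S.sub_mem hx hy)
  -- polarization, and the parallelogram law `‖x + y‖² + ‖x - y‖² = 4`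
  rw [map_add, norm_add_sq_real, norm_add_sq_real] at hu₁ hu₂
  rw [map_sub, norm_sub_sq_real, norm_sub_sq_real] at hv₁ hv₂
  rw [hx1, hy1] at *
  rw [abs_le]
  constructor <;> nlinarith

theorem abs_inner_sub_inner_le (hT : IsRestrictedIsometryOn T S R) {x y : E}
    (hx : x ∈ S) (hy : y ∈ S) :
    |⟪T x, T y⟫_ℝ - ⟪x, y⟫_ℝ| ≤ R * ‖x‖ * ‖y‖ := by
  rcases eq_or_ne x 0 with rfl | hx0
  · simp
  rcases eq_or_ne y 0 with rfl | hy0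
  · simp
  have hunit := hT.abs_inner_sub_inner_le_of_norm_eq_one (S.smul_mem ‖x‖⁻¹ hx)
    (S.smul_mem ‖y‖⁻¹ hy) (norm_smul_inv_norm hx0) (norm_smul_inv_norm hy0)
  rw [map_smul, map_smul, real_inner_smul_left, real_inner_smul_right,
    real_inner_smul_left, real_inner_smul_right, ← mul_assoc, ← mul_assoc, ← mul_sub,
    abs_mul, abs_of_pos (by positivity), ← mul_inv, inv_mul_le_iff₀ (by positivity)] at hunit
  linarith

theorem norm_map_sq_pos (hT : IsRestrictedIsometryOn T S R) (hR : R < 1) {x : E} (hx : x ∈ S)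
    (hx0 : x ≠ 0) : 0 < ‖T x‖ ^ 2 :=
  (mul_pos (sub_pos.2 hR) (pow_pos (norm_pos_iff.2 hx0) 2)).trans_le (hT x hx).1

theorem mul_norm_le_mul_norm_add_smul (hT : IsRestrictedIsometryOn T S R) {g q : E} {β κ : ℝ}
    (hg : g ∈ S) (hq : q ∈ S) (hq0 : q ≠ 0) (hκ₀ : 0 ≤ κ) (hκ₁ : κ ≤ 1) (hR : R < 1)
    (hgq : |⟪g, q⟫_ℝ| ≤ κ * ‖g‖ * ‖q‖) (hβ : β = -⟪T g, T q⟫_ℝ / ‖T q‖ ^ 2) :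
    ((1 - R) - κ * (1 + R)) * ‖g‖ ≤ (1 - R) * ‖g + β • q‖ := by
  have hR₀ := hT.nonneg hq hq0
  obtain ⟨hTq, -⟩ := hT q hq
  have hTq_pos := hT.norm_map_sq_pos hR hq hq0
  have hβTq : β * ‖T q‖ ^ 2 = -⟪T g, T q⟫_ℝ := by rw [hβ, div_mul_cancel₀ _ hTq_pos.ne']
  have hgw : ⟪g, g + β • q⟫_ℝ = ‖g‖ ^ 2 + β * ⟪g, q⟫_ℝ := by
    rw [inner_add_right, real_inner_smul_right, real_inner_self_eq_norm_sq]
  have hTgq : |⟪T g, T q⟫_ℝ| ≤ (κ + R) * ‖g‖ * ‖q‖ := by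
    have := hT.abs_inner_sub_inner_le hg hq
    have := abs_sub_abs_le_abs_sub ⟪T g, T q⟫_ℝ ⟪g, q⟫_ℝ
    linarith
  have hprod : ⟪T g, T q⟫_ℝ * ⟪g, q⟫_ℝ ≤ (κ + R) * κ * ‖g‖ ^ 2 * ‖q‖ ^ 2 := by
    calc ⟪T g, T q⟫_ℝ * ⟪g, q⟫_ℝ ≤ |⟪T g, T q⟫_ℝ| * |⟪g, q⟫_ℝ| := by
          rw [← abs_mul]; exact le_abs_self _
      _ ≤ ((κ + R) * ‖g‖ * ‖q‖) * (κ * ‖g‖ * ‖q‖) :=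
          mul_le_mul hTgq hgq (abs_nonneg _) (by positivity)
      _ = (κ + R) * κ * ‖g‖ ^ 2 * ‖q‖ ^ 2 := by ring
  -- the defining property of `β` makes `⟪g, g + β q⟫ ‖T q‖²` free of `β`
  have hlow : ((1 - R) - κ * (1 + R)) * ‖g‖ ^ 2 ≤ (1 - R) * ⟪g, g + β • q⟫_ℝ := by
    have key : ⟪g, g + β • q⟫_ℝ * ‖T q‖ ^ 2 = ‖g‖ ^ 2 * ‖T q‖ ^ 2 - ⟪T g, T q⟫_ℝ * ⟪g, q⟫_ℝ := by
      rw [hgw, add_mul, mul_right_comm, hβTq]; ring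
    have h1 : (κ + R) * κ * ‖g‖ ^ 2 * ((1 - R) * ‖q‖ ^ 2) ≤
        κ * (1 + R) * ‖g‖ ^ 2 * ‖T q‖ ^ 2 := by
      have : (κ + R) * κ ≤ κ * (1 + R) := by nlinarith
      gcongr
    refine le_of_mul_le_mul_right ?_ hTq_pos
    nlinarith
  have hcs := real_inner_le_norm g (g + β • q)
  rcases (norm_nonneg g).eq_or_lt with hg0 | hg0
  · rw [← hg0, mul_zero]; positivity
  · exact le_of_mul_le_mul_right (by nlinarith) hg0

theorem abs_inner_div_norm_map_sq_sub_one_le (hT : IsRestrictedIsometryOn T S R)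
    {g q w : E} {β κ : ℝ} (hg : g ∈ S) (hq : q ∈ S) (hq0 : q ≠ 0) (hw0 : w ≠ 0)
    (hκ : 0 ≤ κ) (hD : 0 < (1 - R) - κ * (1 + R)) (hgq : |⟪g, q⟫_ℝ| ≤ κ * ‖g‖ * ‖q‖)
    (hβ : β = -⟪T g, T q⟫_ℝ / ‖T q‖ ^ 2) (hw : w = g + β • q) :
    |⟪g, w⟫_ℝ / ‖T w‖ ^ 2 - 1| ≤ R / ((1 - R) - κ * (1 + R)) := by
  have hR₀ := hT.nonneg hq hq0
  have hR : R < 1 := by nlinarith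
  have hwS : w ∈ S := hw ▸ S.add_mem hg (S.smul_mem β hq)
  have hgw := hT.abs_inner_sub_inner_le hg hwS
  have hlow := hT.mul_norm_le_mul_norm_add_smul hg hq hq0 hκ (by nlinarith) hR hgq hβ
  rw [← hw] at hlow
  obtain ⟨hTw, -⟩ := hT w hwS
  have hTw_pos := hT.norm_map_sq_pos hR hwS hw0
  have hTq0 : T q ≠ 0 := fun h ↦ by simpa [h] using hT.norm_map_sq_pos hR hq hq0
  have hTw_eq : ‖T w‖ ^ 2 = ⟪T g, T w⟫_ℝ := by
    rw [hw, map_add, map_smul]; exact norm_add_smul_sq_eq_inner hTq0 hβ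
  rw [div_sub_one hTw_pos.ne', abs_div, abs_of_pos hTw_pos, div_le_div_iff₀ hTw_pos hD]
  calc |⟪g, w⟫_ℝ - ‖T w‖ ^ 2| * ((1 - R) - κ * (1 + R))
      = |⟪T g, T w⟫_ℝ - ⟪g, w⟫_ℝ| * ((1 - R) - κ * (1 + R)) := by rw [hTw_eq, abs_sub_comm]
    _ ≤ R * ‖w‖ * (((1 - R) - κ * (1 + R)) * ‖g‖) := by nlinarith
    _ ≤ R * ‖w‖ * ((1 - R) * ‖w‖) := by gcongr
    _ ≤ R * ‖T w‖ ^ 2 := by nlinarith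

end IsRestrictedIsometryOn

end RestrictedIsometry

section Vectorization

variable {m n p : ℕ}

noncomputable def frobeniusVec : Matrix (Fin m) (Fin n) ℝ ≃ₗ[ℝ] EuclideanSpace ℝ (Fin m × Fin n) :=
  (Matrix.ofLinearEquiv ℝ).symm ≪≫ₗ (LinearEquiv.curry ℝ ℝ (Fin m) (Fin n)).symm ≪≫ₗ
    (WithLp.linearEquiv 2 ℝ (Fin m × Fin n → ℝ)).symm

@[simp]
theorem frobeniusVec_apply (Z : Matrix (Fin m) (Fin n) ℝ) (ij : Fin m × Fin n) :
    frobeniusVec Z ij = Z ij.1 ij.2 := rfl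

@[simp]
theorem inner_frobeniusVec (Z W : Matrix (Fin m) (Fin n) ℝ) :
    ⟪frobeniusVec Z, frobeniusVec W⟫_ℝ = frobInner Z W := by
  simp [PiLp.inner_apply, frobInner, Fintype.sum_prod_type, mul_comm]

@[simp]
theorem norm_frobeniusVec (Z : Matrix (Fin m) (Fin n) ℝ) :
    ‖frobeniusVec Z‖ = frobNorm Z := by
  simp [EuclideanSpace.norm_eq, frobNorm, Fintype.sum_prod_type]

@[simp]
theorem inner_toLp (x y : Fin p → ℝ) :
    ⟪WithLp.toLp 2 x, WithLp.toLp 2 y⟫_ℝ = euclInner x y := by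
  simp [PiLp.inner_apply, euclInner, mul_comm]

@[simp]
theorem norm_toLp (x : Fin p → ℝ) : ‖WithLp.toLp 2 x‖ = euclNorm x := by
  simp [EuclideanSpace.norm_eq, euclNorm]

noncomputable def vecMap (A : Matrix (Fin m) (Fin n) ℝ →ₗ[ℝ] (Fin p → ℝ)) :
    EuclideanSpace ℝ (Fin m × Fin n) →ₗ[ℝ] EuclideanSpace ℝ (Fin p) :=
  (WithLp.linearEquiv 2 ℝ (Fin p → ℝ)).symm.toLinearMap ∘ₗ A ∘ₗ frobeniusVec.symm.toLinearMap

@[simp]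
theorem vecMap_frobeniusVec (A : Matrix (Fin m) (Fin n) ℝ →ₗ[ℝ] (Fin p → ℝ))
    (Z : Matrix (Fin m) (Fin n) ℝ) : vecMap A (frobeniusVec Z) = WithLp.toLp 2 (A Z) := by
  simp [vecMap]

end Vectorization

theorem Matrix.rank_add_le {m n K : Type*} [Fintype m] [Fintype n] [Field K]
    (A B : Matrix m n K) : (A + B).rank ≤ A.rank + B.rank := by
  rw [Matrix.rank, Matrix.rank, Matrix.rank, Matrix.mulVecLin_add]
  exact (Submodule.finrank_mono (LinearMap.range_add_le _ _)).trans
    (Submodule.finrank_add_le_finrank_add_finrank _ _)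

section TangentSpace

variable {m n r : ℕ} (U : Matrix (Fin m) (Fin r) ℝ) (V : Matrix (Fin n) (Fin r) ℝ)

noncomputable def tangentProjₗ : Matrix (Fin m) (Fin n) ℝ →ₗ[ℝ] Matrix (Fin m) (Fin n) ℝ where
  toFun := tangentProj U V
  map_add' X Y := by simp only [tangentProj, Matrix.mul_add, Matrix.add_mul]; abel
  map_smul' c X := by simp [tangentProj, smul_sub]

noncomputable def tangentSpace : Submodule ℝ (Matrix (Fin m) (Fin n) ℝ) :=
  LinearMap.range (tangentProjₗ U V)

theorem tangentProj_mem_tangentSpace (Z : Matrix (Fin m) (Fin n) ℝ) :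
    tangentProj U V Z ∈ tangentSpace U V :=
  LinearMap.mem_range_self (tangentProjₗ U V) Z

theorem tangentProj_tangentProj (hU : Uᵀ * U = 1) (hV : Vᵀ * V = 1) (Z : Matrix (Fin m) (Fin n) ℝ) :
    tangentProj U V (tangentProj U V Z) = tangentProj U V Z := by
  have hUU : ∀ X : Matrix (Fin r) (Fin n) ℝ, Uᵀ * (U * X) = X := by
    intro X; rw [← Matrix.mul_assoc, hU, Matrix.one_mul]
  have hVV : Vᵀ * (V * Vᵀ) = Vᵀ := by
    rw [← Matrix.mul_assoc, hV, Matrix.one_mul]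
  simp only [tangentProj, Matrix.mul_add, Matrix.add_mul, Matrix.mul_sub, Matrix.sub_mul,
    Matrix.mul_assoc, hUU, hVV]
  abel

theorem tangentProj_eq_self_of_mem (hU : Uᵀ * U = 1) (hV : Vᵀ * V = 1)
    {Z : Matrix (Fin m) (Fin n) ℝ} (hZ : Z ∈ tangentSpace U V) : tangentProj U V Z = Z := by
  obtain ⟨Y, rfl⟩ := hZ
  exact tangentProj_tangentProj U V hU hV Y

theorem rank_tangentProj_le (Z : Matrix (Fin m) (Fin n) ℝ) :
    (tangentProj U V Z).rank ≤ 2 * r := by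
  have hdecomp : tangentProj U V Z = U * (Uᵀ * Z) + ((Z - U * Uᵀ * Z) * V) * Vᵀ := by
    simp only [tangentProj, Matrix.sub_mul, Matrix.mul_assoc]
    abel
  rw [hdecomp, two_mul]
  refine (Matrix.rank_add_le _ _).trans (add_le_add ?_ ?_)
  · exact (Matrix.rank_mul_le_left U _).trans ((Matrix.rank_le_card_width U).trans (by simp))
  · exact (Matrix.rank_mul_le_right _ Vᵀ).trans ((Matrix.rank_le_card_height Vᵀ).trans (by simp))

theorem rank_le_of_mem_tangentSpace {Z : Matrix (Fin m) (Fin n) ℝ} (hZ : Z ∈ tangentSpace U V) :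
    Z.rank ≤ 2 * r := by
  obtain ⟨Y, rfl⟩ := hZ
  exact rank_tangentProj_le U V Y

end TangentSpace

theorem IsRIC.isRestrictedIsometryOn {m n p s : ℕ} {A : Matrix (Fin m) (Fin n) ℝ →ₗ[ℝ] (Fin p → ℝ)}
    {R : ℝ} (hR : IsRIC A s R) {S : Submodule ℝ (Matrix (Fin m) (Fin n) ℝ)}
    (hS : ∀ Z ∈ S, Z.rank ≤ s) :
    IsRestrictedIsometryOn (vecMap A) (S.map frobeniusVec.toLinearMap) R := by
  rintro _ ⟨Z, hZ, rfl⟩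
  simpa using hR.1 Z (hS Z hZ)

theorem alpha_bound_general {m n p r : ℕ}
    (A : Matrix (Fin m) (Fin n) ℝ →ₗ[ℝ] (Fin p → ℝ))
    (R2 : ℝ) (hR2 : IsRIC A (2 * r) R2)
    -- reduced SVD of `X_l`, defining the tangent space `S_l`
    (Ul : Matrix (Fin m) (Fin r) ℝ) (Vl : Matrix (Fin n) (Fin r) ℝ)
    (hUl : Ulᵀ * Ul = 1) (hVl : Vlᵀ * Vl = 1)
    (G P : Matrix (Fin m) (Fin n) ℝ)
    (hPne : tangentProj Ul Vl P ≠ 0)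
    (κ1 : ℝ) (hκ1 : 0 < κ1 ∧ κ1 < 1)
    (hpos : (1 - R2) - κ1 * (1 + R2) > 0)
    -- restart conditions
    (hcond1 : |frobInner (tangentProj Ul Vl G) (tangentProj Ul Vl P)| ≤
      κ1 * frobNorm (tangentProj Ul Vl G) * frobNorm (tangentProj Ul Vl P))
    (β : ℝ)
    (hβ : β = -(euclInner (A (tangentProj Ul Vl G)) (A (tangentProj Ul Vl P))) /
      (euclNorm (A (tangentProj Ul Vl P))) ^ 2)
    (Pl : Matrix (Fin m) (Fin n) ℝ)
    (hPl : Pl = tangentProj Ul Vl G + β • tangentProj Ul Vl P)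
    (hPlne : tangentProj Ul Vl Pl ≠ 0)
    (α : ℝ)
    (hα : α = frobInner (tangentProj Ul Vl G) (tangentProj Ul Vl Pl) /
      (euclNorm (A (tangentProj Ul Vl Pl))) ^ 2) :
    |α - 1| ≤ R2 / ((1 - R2) - κ1 * (1 + R2)) := by
  set S := (tangentSpace Ul Vl).map frobeniusVec.toLinearMap
  have hT : IsRestrictedIsometryOn (vecMap A) S R2 :=
    hR2.isRestrictedIsometryOn (fun _ ↦ rank_le_of_mem_tangentSpace Ul Vl)
  have hmem : ∀ Z, frobeniusVec (tangentProj Ul Vl Z) ∈ S :=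
    fun Z ↦ Submodule.mem_map_of_mem (tangentProj_mem_tangentSpace Ul Vl Z)
  have hPl_mem : Pl ∈ tangentSpace Ul Vl := hPl ▸ add_mem (tangentProj_mem_tangentSpace Ul Vl G)
    (Submodule.smul_mem _ β (tangentProj_mem_tangentSpace Ul Vl P))
  rw [tangentProj_eq_self_of_mem Ul Vl hUl hVl hPl_mem] at hPlne hα
  have key := hT.abs_inner_div_norm_map_sq_sub_one_le (hmem G) (hmem P)
    (frobeniusVec.map_ne_zero_iff.2 hPne) (frobeniusVec.map_ne_zero_iff.2 hPlne) hκ1.1.le hpos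
    (by simpa using hcond1) (by simpa using hβ) (by rw [hPl, map_add, map_smul])
  simpa [hα] using key

/-- Lemma 6, bound on `α_l`: under the restart conditions,
`|α_l − 1| ≤ R₂ᵣ / ((1 − R₂ᵣ) − κ₁(1 + R₂ᵣ))`. -/
theorem alpha_bound {m n p r : ℕ}
    (A : Matrix (Fin m) (Fin n) ℝ →ₗ[ℝ] (Fin p → ℝ))
    (R2 : ℝ) (hR2 : IsRIC A (2 * r) R2)
    (Xl : Matrix (Fin m) (Fin n) ℝ) (hrankXl : Xl.rank = r)
    -- reduced SVD of `X_l`, defining the tangent space `S_l`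
    (Ul : Matrix (Fin m) (Fin r) ℝ) (Vl : Matrix (Fin n) (Fin r) ℝ)
    (Sl : Matrix (Fin r) (Fin r) ℝ)
    (hUl : Ulᵀ * Ul = 1) (hVl : Vlᵀ * Vl = 1)
    (hSl : Sl.IsDiag ∧ ∀ i, 0 < Sl i i) (hXlsvd : Xl = Ul * Sl * Vlᵀ)
    (G P : Matrix (Fin m) (Fin n) ℝ)
    (hPne : tangentProj Ul Vl P ≠ 0)
    (κ1 κ2 : ℝ) (hκ1 : 0 < κ1 ∧ κ1 < 1) (hκ2 : 1 ≤ κ2)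
    (hpos : (1 - R2) - κ1 * (1 + R2) > 0)
    -- restart conditions
    (hcond1 : |frobInner (tangentProj Ul Vl G) (tangentProj Ul Vl P)| ≤
      κ1 * frobNorm (tangentProj Ul Vl G) * frobNorm (tangentProj Ul Vl P))
    (hcond2 : frobNorm (tangentProj Ul Vl G) ≤ κ2 * frobNorm (tangentProj Ul Vl P))
    (β : ℝ)
    (hβ : β = -(euclInner (A (tangentProj Ul Vl G)) (A (tangentProj Ul Vl P))) /
      (euclNorm (A (tangentProj Ul Vl P))) ^ 2)
    (Pl : Matrix (Fin m) (Fin n) ℝ)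
    (hPl : Pl = tangentProj Ul Vl G + β • tangentProj Ul Vl P)
    (hPlne : tangentProj Ul Vl Pl ≠ 0)
    (α : ℝ)
    (hα : α = frobInner (tangentProj Ul Vl G) (tangentProj Ul Vl Pl) /
      (euclNorm (A (tangentProj Ul Vl Pl))) ^ 2) :
    |α - 1| ≤ R2 / ((1 - R2) - κ1 * (1 + R2)) :=
  alpha_bound_general A R2 hR2 Ul Vl hUl hVl G P hPne κ1 hκ1 hpos hcond1 β hβ Pl hPl hPlne α hα
end

section
/- Let 𝒜 : ℝ^{m×n} → ℝ^p be a linear map with restricted isometry constant R_{2r}, let S be the tangent space of the rank-r matrix manifold at a rank-r matrix, and let Z be an m×n matrix of rank at most 2r. Then ‖P_S(𝒜* 𝒜 (Z))‖_F ≤ (1 + R_{2r}) ‖Z‖_F. -/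
open Matrix BigOperators

section Aux

lemma frobInner_comm {m n : ℕ} (A B : Matrix (Fin m) (Fin n) ℝ) :
    frobInner A B = frobInner B A := by
  simp [frobInner, mul_comm]

lemma frobNorm_sq {m n : ℕ} (A : Matrix (Fin m) (Fin n) ℝ) :
    (frobNorm A) ^ 2 = frobInner A A := by
  rw [frobNorm, Real.sq_sqrt (by positivity)]
  simp [frobInner, sq]

lemma frobNorm_eq_zero {m n : ℕ} {A : Matrix (Fin m) (Fin n) ℝ}
    (h : frobNorm A = 0) : A = 0 := by
  rw [frobNorm, Real.sqrt_eq_zero (by positivity)] at h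
  ext i j
  have h1 := (Finset.sum_eq_zero_iff_of_nonneg (fun i _ => by positivity)).1 h i (Finset.mem_univ i)
  have h2 := (Finset.sum_eq_zero_iff_of_nonneg (fun j _ => by positivity)).1 h1 j (Finset.mem_univ j)
  simpa using pow_eq_zero_iff (n := 2) (by norm_num) |>.1 h2

lemma frobInner_mul_left {m n q : ℕ} (B : Matrix (Fin m) (Fin q) ℝ)
    (X : Matrix (Fin q) (Fin n) ℝ) (Y : Matrix (Fin m) (Fin n) ℝ) :
    frobInner (B * X) Y = frobInner X (Bᵀ * Y) := by
  simp only [frobInner, Matrix.mul_apply, Matrix.transpose_apply, Finset.sum_mul,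
    Finset.mul_sum]
  rw [Finset.sum_comm]
  conv_rhs => rw [Finset.sum_comm]
  refine Finset.sum_congr rfl fun j _ => ?_
  rw [Finset.sum_comm]
  exact Finset.sum_congr rfl fun k _ => Finset.sum_congr rfl fun i _ => by ring

lemma frobInner_mul_right {m n q : ℕ} (X : Matrix (Fin m) (Fin q) ℝ)
    (C : Matrix (Fin q) (Fin n) ℝ) (Y : Matrix (Fin m) (Fin n) ℝ) :
    frobInner (X * C) Y = frobInner X (Y * Cᵀ) := by
  simp only [frobInner, Matrix.mul_apply, Matrix.transpose_apply, Finset.sum_mul,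
    Finset.mul_sum]
  refine Finset.sum_congr rfl fun i _ => ?_
  rw [Finset.sum_comm]
  exact Finset.sum_congr rfl fun k _ => Finset.sum_congr rfl fun j _ => by ring

lemma frobInner_add_left {m n : ℕ} (X Y W : Matrix (Fin m) (Fin n) ℝ) :
    frobInner (X + Y) W = frobInner X W + frobInner Y W := by
  simp [frobInner, add_mul, Finset.sum_add_distrib]

lemma frobInner_sub_left {m n : ℕ} (X Y W : Matrix (Fin m) (Fin n) ℝ) :
    frobInner (X - Y) W = frobInner X W - frobInner Y W := by
  simp [frobInner, sub_mul, Finset.sum_sub_distrib]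

lemma tangentProj_selfAdjoint {m n r : ℕ} (U : Matrix (Fin m) (Fin r) ℝ)
    (V : Matrix (Fin n) (Fin r) ℝ) (X Y : Matrix (Fin m) (Fin n) ℝ) :
    frobInner (tangentProj U V X) Y = frobInner X (tangentProj U V Y) := by
  have hUt : (U * Uᵀ)ᵀ = U * Uᵀ := by simp [Matrix.transpose_mul]
  have hVt : (V * Vᵀ)ᵀ = V * Vᵀ := by simp [Matrix.transpose_mul]
  have h1 : frobInner (U * Uᵀ * X) Y = frobInner X (U * Uᵀ * Y) := by
    rw [frobInner_mul_left, hUt]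
  have h2 : frobInner (X * (V * Vᵀ)) Y = frobInner X (Y * (V * Vᵀ)) := by
    rw [frobInner_mul_right, hVt]
  have h3 : frobInner (U * Uᵀ * X * (V * Vᵀ)) Y = frobInner X (U * Uᵀ * Y * (V * Vᵀ)) := by
    rw [frobInner_mul_right, hVt, frobInner_mul_left, hUt]
    congr 1
    simp [Matrix.mul_assoc]
  simp only [tangentProj, frobInner_add_left, frobInner_sub_left, h1, h2, h3]
  rw [frobInner_comm X (U * Uᵀ * Y + Y * (V * Vᵀ) - U * Uᵀ * Y * (V * Vᵀ))]
  simp only [frobInner_add_left, frobInner_sub_left]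
  rw [frobInner_comm (U * Uᵀ * Y) X, frobInner_comm (Y * (V * Vᵀ)) X,
    frobInner_comm (U * Uᵀ * Y * (V * Vᵀ)) X]

lemma tangentProj_idem {m n r : ℕ} (U : Matrix (Fin m) (Fin r) ℝ)
    (V : Matrix (Fin n) (Fin r) ℝ) (hU : Uᵀ * U = 1) (hV : Vᵀ * V = 1)
    (X : Matrix (Fin m) (Fin n) ℝ) :
    tangentProj U V (tangentProj U V X) = tangentProj U V X := by
  have hU' : ∀ {k : ℕ} (W : Matrix (Fin r) (Fin k) ℝ), Uᵀ * (U * W) = W := by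
    intro k W; rw [← Matrix.mul_assoc, hU, Matrix.one_mul]
  have hV' : ∀ {k : ℕ} (W : Matrix (Fin r) (Fin k) ℝ), Vᵀ * (V * W) = W := by
    intro k W; rw [← Matrix.mul_assoc, hV, Matrix.one_mul]
  simp only [tangentProj, Matrix.mul_add, Matrix.add_mul, Matrix.mul_sub, Matrix.sub_mul,
    Matrix.mul_assoc, hU', hV']
  abel

lemma matRank_add_le {m n : ℕ} (A B : Matrix (Fin m) (Fin n) ℝ) :
    (A + B).rank ≤ A.rank + B.rank := by
  have h : LinearMap.range (A + B).mulVecLin ≤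
      LinearMap.range A.mulVecLin ⊔ LinearMap.range B.mulVecLin := by
    rintro x ⟨y, rfl⟩
    refine Submodule.mem_sup.2 ⟨A.mulVecLin y, ⟨y, rfl⟩, B.mulVecLin y, ⟨y, rfl⟩, ?_⟩
    simp [Matrix.mulVecLin_apply, Matrix.add_mulVec]
  exact (Submodule.finrank_mono h).trans
    (Submodule.finrank_add_le_finrank_add_finrank _ _)

end Aux

/-- For `Z` of rank at most `2r`,
`‖P_S(𝒜* 𝒜 (Z))‖_F ≤ (1 + R₂ᵣ) ‖Z‖_F`. -/
theorem tangent_proj_AstarA_rank2r_bound {m n p r : ℕ}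
    (A : Matrix (Fin m) (Fin n) ℝ →ₗ[ℝ] (Fin p → ℝ))
    (Astar : (Fin p → ℝ) →ₗ[ℝ] Matrix (Fin m) (Fin n) ℝ)
    (hAstar : ∀ (v : Fin p → ℝ) (Z : Matrix (Fin m) (Fin n) ℝ),
      euclInner (A Z) v = frobInner Z (Astar v))
    (R2 : ℝ) (hR2 : IsRIC A (2 * r) R2)
    (Xl : Matrix (Fin m) (Fin n) ℝ) (hrankXl : Xl.rank = r)
    -- reduced SVD of `X_l`, defining the tangent space `S`
    (Ul : Matrix (Fin m) (Fin r) ℝ) (Vl : Matrix (Fin n) (Fin r) ℝ)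
    (Sl : Matrix (Fin r) (Fin r) ℝ)
    (hUl : Ulᵀ * Ul = 1) (hVl : Vlᵀ * Vl = 1)
    (hSl : Sl.IsDiag ∧ ∀ i, 0 < Sl i i) (hXlsvd : Xl = Ul * Sl * Vlᵀ)
    (Z : Matrix (Fin m) (Fin n) ℝ) (hrankZ : Z.rank ≤ 2 * r) :
    frobNorm (tangentProj Ul Vl (Astar (A Z))) ≤ (1 + R2) * frobNorm Z := by
  obtain ⟨hmem, -⟩ := hR2
  set M : Matrix (Fin m) (Fin n) ℝ := Astar (A Z) with hM
  set W : Matrix (Fin m) (Fin n) ℝ := tangentProj Ul Vl M with hWdef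
  -- trivial case Z = 0
  by_cases hZ0 : frobNorm Z = 0
  · have hZ : Z = 0 := frobNorm_eq_zero hZ0
    subst hZ
    have : W = 0 := by
      simp only [hWdef, hM, map_zero]
      simp [tangentProj]
    rw [this, hZ0]
    simp [frobNorm]
  -- Z ≠ 0
  have hfZpos : 0 < frobNorm Z := lt_of_le_of_ne (frobNorm_nonneg Z) (Ne.symm hZ0)
  have hZbound := (hmem Z hrankZ).2
  have h1R : 0 ≤ 1 + R2 := by
    nlinarith [sq_nonneg (euclNorm (A Z)), pow_pos hfZpos 2, hZbound]
  -- rank of W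
  have hWalt : W = Ul * (Ulᵀ * M) + (M - Ul * (Ulᵀ * M)) * Vl * Vlᵀ := by
    simp only [hWdef, tangentProj, Matrix.sub_mul, Matrix.mul_assoc]
    abel
  have hrankW : W.rank ≤ 2 * r := by
    rw [hWalt]
    calc (Ul * (Ulᵀ * M) + (M - Ul * (Ulᵀ * M)) * Vl * Vlᵀ).rank
        ≤ (Ul * (Ulᵀ * M)).rank + ((M - Ul * (Ulᵀ * M)) * Vl * Vlᵀ).rank :=
          matRank_add_le _ _
      _ ≤ r + r := by
          gcongr
          · exact (Matrix.rank_mul_le_left _ _).trans (Matrix.rank_le_width Ul)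
          · exact (Matrix.rank_mul_le_right _ _).trans
              ((Matrix.rank_le_card_height Vlᵀ).trans (by simp))
      _ = 2 * r := by ring
  have hWbound := (hmem W hrankW).2
  -- ‖W‖² = ⟨A W, A Z⟩
  have hkey : (frobNorm W) ^ 2 = euclInner (A W) (A Z) := by
    rw [hAstar (A Z) W, ← hM, frobNorm_sq]
    calc frobInner W W = frobInner (tangentProj Ul Vl M) W := by rw [← hWdef]
      _ = frobInner M (tangentProj Ul Vl W) := tangentProj_selfAdjoint _ _ _ _
      _ = frobInner M W := by rw [hWdef, tangentProj_idem Ul Vl hUl hVl]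
      _ = frobInner W M := frobInner_comm _ _
  -- Cauchy-Schwarz
  have hCS : euclInner (A W) (A Z) ≤ euclNorm (A W) * euclNorm (A Z) := by
    simpa [euclInner, euclNorm] using
      Real.sum_mul_le_sqrt_mul_sqrt Finset.univ (A W) (A Z)
  set s : ℝ := Real.sqrt (1 + R2) with hs
  have hs2 : s ^ 2 = 1 + R2 := Real.sq_sqrt h1R
  have hsnn : 0 ≤ s := Real.sqrt_nonneg _
  have hAW : euclNorm (A W) ≤ s * frobNorm W := by
    calc euclNorm (A W) = Real.sqrt (euclNorm (A W) ^ 2) :=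
          (Real.sqrt_sq (euclNorm_nonneg _)).symm
      _ ≤ Real.sqrt ((s * frobNorm W) ^ 2) :=
          Real.sqrt_le_sqrt (by rw [mul_pow, hs2]; exact hWbound)
      _ = s * frobNorm W := Real.sqrt_sq (mul_nonneg hsnn (frobNorm_nonneg _))
  have hAZ : euclNorm (A Z) ≤ s * frobNorm Z := by
    calc euclNorm (A Z) = Real.sqrt (euclNorm (A Z) ^ 2) :=
          (Real.sqrt_sq (euclNorm_nonneg _)).symm
      _ ≤ Real.sqrt ((s * frobNorm Z) ^ 2) :=
          Real.sqrt_le_sqrt (by rw [mul_pow, hs2]; exact hZbound)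
      _ = s * frobNorm Z := Real.sqrt_sq (mul_nonneg hsnn (frobNorm_nonneg _))
  have hfinal : (frobNorm W) ^ 2 ≤ (1 + R2) * frobNorm W * frobNorm Z := by
    calc (frobNorm W) ^ 2 = euclInner (A W) (A Z) := hkey
      _ ≤ euclNorm (A W) * euclNorm (A Z) := hCS
      _ ≤ (s * frobNorm W) * (s * frobNorm Z) := by
          exact mul_le_mul hAW hAZ (euclNorm_nonneg _) (mul_nonneg hsnn (frobNorm_nonneg _))
      _ = (1 + R2) * frobNorm W * frobNorm Z := by rw [← hs2]; ring
  by_cases hW0 : frobNorm W = 0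
  · rw [hW0]
    exact mul_nonneg h1R (frobNorm_nonneg Z)
  · have hfWpos : 0 < frobNorm W := lt_of_le_of_ne (frobNorm_nonneg W) (Ne.symm hW0)
    nlinarith [hfinal, hfWpos]
end
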